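/- arXiv:1409.0183 — 5 statements merged into one kernel-verified Lean document; each statement's English description precedes it below -/
import Mathlib

section
/- Let V be a complex manifold equipped with a metric δ inducing its topology, and let f : 𝔻∖{0} → V be holomorphic. Suppose that f admits no holomorphic extension 𝔻 → V, and that there exists a sequence (z_n) in 𝔻∖{0} with z_n → 0 such that (f(z_n)) converges in V. Then there exists a sequence (w_n) in 𝔻∖{0} with w_n → 0 such that (f(w_n)) converges in V and liminf_{n→∞} diam_δ( f({z ∈ ℂ : |z| = |w_n|}) ) > 0, where diam_δ(S) := sup{δ(a,a') : a, a' ∈ S}. -/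
open Filter Metric Set Topology
open scoped Manifold ENNReal

noncomputable section

/-- The inverse hyperbolic tangent. -/
def arctanh (x : ℝ) : ℝ := Real.log ((1 + x) / (1 - x)) / 2

/-- The Poincaré distance on the unit disc. -/
def poincareDist (a b : ℂ) : ℝ :=
  arctanh (‖(a - b) / (1 - (starRingEnd ℂ) a * b)‖)

/-- The Kobayashi pseudodistance between two points of a complex manifold `M`
(modeled on the complex normed space `E`), computed with chains of holomorphic discs
whose images lie in the subset `U`.  The value is `∞` if no chain exists. -/
def kobayashiDistOn (E : Type*) [NormedAddCommGroup E] [NormedSpace ℂ E]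
    {M : Type*} [TopologicalSpace M] [ChartedSpace E M] (U : Set M) (p q : M) : ℝ≥0∞ :=
  ⨅ (m : ℕ) (f : Fin (m + 1) → ℂ → M) (ab : Fin (m + 1) → ℂ × ℂ)
    (_ : ∀ j, MDifferentiableOn 𝓘(ℂ, ℂ) 𝓘(ℂ, E) (f j) (ball (0 : ℂ) 1))
    (_ : ∀ j, f j '' ball (0 : ℂ) 1 ⊆ U)
    (_ : ∀ j, (ab j).1 ∈ ball (0 : ℂ) 1 ∧ (ab j).2 ∈ ball (0 : ℂ) 1)
    (_ : f 0 (ab 0).1 = p) (_ : f (Fin.last m) (ab (Fin.last m)).2 = q)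
    (_ : ∀ j : Fin m, f j.castSucc (ab j.castSucc).2 = f j.succ (ab j.succ).1),
    ENNReal.ofReal (∑ j, poincareDist (ab j).1 (ab j).2)

/-- A metric on a compact complex manifold `V` is admissible if (the metric induces the
topology of `V`, which is automatic here, and) there is a family of Kobayashi hyperbolic
open neighbourhoods `U x` of the points `x` of `V` on which the metric is dominated by
the Kobayashi pseudodistance of `U x`. -/
def IsAdmissible (E : Type*) [NormedAddCommGroup E] [NormedSpace ℂ E]
    (V : Type*) [MetricSpace V] [ChartedSpace E V] : Prop :=
  ∃ U : V → Set V, ∀ x : V, x ∈ U x ∧ IsOpen (U x) ∧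
    (∀ p q : V, p ∈ U x → q ∈ U x → p ≠ q → 0 < kobayashiDistOn E (U x) p q) ∧
    (∀ p q : V, p ∈ U x → q ∈ U x →
      ENNReal.ofReal (dist p q) ≤ kobayashiDistOn E (U x) p q)

/-- The Poincaré distance of the disc `𝔻(a,r)`. -/
def discDist (a : ℂ) (r : ℝ) (z w : ℂ) : ℝ :=
  arctanh (r * ‖z - w‖ /
    ‖(r : ℂ) ^ 2 - (starRingEnd ℂ) (z - a) * (w - a)‖)

/-- The Lipschitz constant `L_{f, 𝔻(a,r)}` of a map `f` on the disc `𝔻(a,r)`, with respect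
to the Poincaré distance of `𝔻(a,r)` on the source and the metric of `V` on the target. -/
def LipConst {V : Type*} [MetricSpace V] (f : ℂ → V) (a : ℂ) (r : ℝ) : ℝ≥0∞ :=
  ⨆ (w : ℂ) (_ : w ∈ ball a r) (w' : ℂ) (_ : w' ∈ ball a r) (_ : w ≠ w'),
    ENNReal.ofReal (dist (f w) (f w') / discDist a r w w')

/-- A family `F` of maps is normal on `D` if every sequence in `F` has a subsequence
converging uniformly on every compact subset of `D`. -/
def NormalOn {V : Type*} [MetricSpace V] (F : Set (ℂ → V)) (D : Set ℂ) : Prop :=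
  ∀ f : ℕ → ℂ → V, (∀ n, f n ∈ F) →
    ∃ φ : ℕ → ℕ, StrictMono φ ∧ ∃ g : ℂ → V,
      ∀ K : Set ℂ, K ⊆ D → IsCompact K →
        TendstoUniformlyOn (fun n => f (φ n)) g atTop K

lemma exists_subseq_tendsto_zero' {a : ℕ → ℝ≥0∞} (h : atTop.liminf a ≤ 0) :
    ∃ φ : ℕ → ℕ, StrictMono φ ∧ Tendsto (a ∘ φ) atTop (𝓝 0) := by
  have h0 : atTop.liminf a = 0 := le_antisymm h (zero_le)
  have hinf : ∀ n : ℕ, (⨅ i ≥ n, a i) = 0 := by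
    intro n
    have H := Filter.liminf_eq_iSup_iInf_of_nat (u := a)
    rw [h0] at H
    exact le_antisymm (le_trans (le_iSup (fun n => ⨅ i ≥ n, a i) n) H.ge) (zero_le)
  have key : ∀ n k : ℕ, ∃ i, n ≤ i ∧ a i < ((k : ℝ≥0∞) + 1)⁻¹ := by
    intro n k
    have hpos : (0 : ℝ≥0∞) < ((k : ℝ≥0∞) + 1)⁻¹ :=
      ENNReal.inv_pos.2 (ENNReal.add_ne_top.2 ⟨ENNReal.natCast_ne_top k, ENNReal.one_ne_top⟩)
    have hlt : (⨅ i ≥ n, a i) < ((k : ℝ≥0∞) + 1)⁻¹ := by rw [hinf n]; exact hpos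
    rw [iInf_lt_iff] at hlt
    obtain ⟨i, hi⟩ := hlt
    rw [iInf_lt_iff] at hi
    obtain ⟨hni, hik⟩ := hi
    exact ⟨i, hni, hik⟩
  have key' : ∀ k : ℕ, ∃ᶠ i in atTop, a i < ((k : ℝ≥0∞) + 1)⁻¹ := by
    intro k
    rw [frequently_atTop]
    exact fun n => key n k
  obtain ⟨φ, hφ, hP⟩ := Filter.extraction_forall_of_frequently key'
  refine ⟨φ, hφ, ?_⟩
  have h1 : Tendsto (fun k : ℕ => ((k : ℝ≥0∞) + 1)⁻¹) atTop (𝓝 0) := by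
    have h2 : Tendsto (fun k : ℕ => ((k : ℝ≥0∞))⁻¹) atTop (𝓝 0) :=
      ENNReal.tendsto_inv_nat_nhds_zero
    refine tendsto_of_tendsto_of_tendsto_of_le_of_le tendsto_const_nhds h2
      (fun k => zero_le) (fun k => ?_)
    gcongr
    exact le_self_add
  exact tendsto_of_tendsto_of_tendsto_of_le_of_le tendsto_const_nhds h1
    (fun k => zero_le) (fun k => (hP k).le)

theorem statement_1 {E : Type*} [NormedAddCommGroup E] [NormedSpace ℂ E]
    [FiniteDimensional ℂ E]
    (V : Type*) [MetricSpace V] [ChartedSpace E V] [IsManifold 𝓘(ℂ, E) (⊤ : WithTop ℕ∞) V]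
    (f : ℂ → V) (hf : MDifferentiableOn 𝓘(ℂ, ℂ) 𝓘(ℂ, E) f (ball (0 : ℂ) 1 \ {0}))
    (hne : ¬ ∃ g : ℂ → V, MDifferentiableOn 𝓘(ℂ, ℂ) 𝓘(ℂ, E) g (ball (0 : ℂ) 1) ∧
      Set.EqOn g f (ball (0 : ℂ) 1 \ {0}))
    (z : ℕ → ℂ) (hzmem : ∀ n, z n ∈ ball (0 : ℂ) 1 \ {0})
    (hz : Tendsto z atTop (𝓝 0))
    (hconv : ∃ L : V, Tendsto (fun n => f (z n)) atTop (𝓝 L)) :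
    ∃ w : ℕ → ℂ, (∀ n, w n ∈ ball (0 : ℂ) 1 \ {0}) ∧ Tendsto w atTop (𝓝 0) ∧
      (∃ L : V, Tendsto (fun n => f (w n)) atTop (𝓝 L)) ∧
      0 < atTop.liminf
        (fun n => EMetric.diam (f '' {ζ : ℂ | ‖ζ‖ = ‖w n‖})) := by
  obtain ⟨L, hL⟩ := hconv
  by_contra hcon
  push_neg at hcon
  -- basic facts
  have hopen : IsOpen (ball (0 : ℂ) 1 \ {0}) := isOpen_ball.sdiff isClosed_singleton
  have hfc : ContinuousOn f (ball (0 : ℂ) 1 \ {0}) := hf.continuousOn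
  have hmem_iff : ∀ x : ℂ, x ∈ ball (0 : ℂ) 1 \ {0} ↔ 0 < ‖x‖ ∧ ‖x‖ < 1 := by
    intro x
    simp [mem_ball_zero_iff, and_comm, norm_pos_iff, sub_eq_zero]
  -- chart setup
  set ch := extChartAt 𝓘(ℂ, E) L with hch
  have hLS : L ∈ ch.source := mem_extChartAt_source L
  have hSopen : IsOpen ch.source := isOpen_extChartAt_source L
  haveI : LocallyCompactSpace V := ChartedSpace.locallyCompactSpace E V
  obtain ⟨r₀, hr₀pos, hKcomp, hKS⟩ :
      ∃ r₀ : ℝ, 0 < r₀ ∧ IsCompact (closedBall L r₀) ∧ closedBall L r₀ ⊆ ch.source := by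
    obtain ⟨K', hK'c, hK'n⟩ := exists_compact_mem_nhds L
    have hmem : K' ∩ ch.source ∈ 𝓝 L := inter_mem hK'n (hSopen.mem_nhds hLS)
    obtain ⟨r, hrpos, hrsub⟩ := Metric.nhds_basis_closedBall.mem_iff.mp hmem
    exact ⟨r, hrpos,
      hK'c.of_isClosed_subset isClosed_closedBall (hrsub.trans inter_subset_left),
      hrsub.trans inter_subset_right⟩
  set K := closedBall L r₀ with hK
  have hchc : ContinuousOn ch K :=
    (continuousOn_extChartAt (I := 𝓘(ℂ, E)) L).mono hKS
  have hUC : UniformContinuousOn ch K := hKcomp.uniformContinuousOn_of_continuous hchc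
  set F := fun x : ℂ => ch (f x) with hF
  have hFdiff : ∀ x : ℂ, x ∈ ball (0 : ℂ) 1 \ {0} → f x ∈ ch.source →
      DifferentiableAt ℂ F x := by
    intro x hx hfx
    have h1 : MDifferentiableAt 𝓘(ℂ, ℂ) 𝓘(ℂ, E) f x := hf.mdifferentiableAt (hopen.mem_nhds hx)
    have h2 : MDifferentiableAt 𝓘(ℂ, E) 𝓘(ℂ, E) ch (f x) := by
      have h3 : ContMDiffAt 𝓘(ℂ, E) 𝓘(ℂ, E) 1 ch (f x) :=
        contMDiffAt_extChartAt' (by rwa [extChartAt_source] at hfx)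
      exact h3.mdifferentiableAt one_ne_zero
    exact mdifferentiableAt_iff_differentiableAt.mp (h2.comp x h1)
  by_cases hsmall : ∃ ρ : ℝ, 0 < ρ ∧ ρ < 1 ∧
      ∀ x : ℂ, x ≠ 0 → ‖x‖ < ρ → f x ∈ closedBall L r₀
  · -- extension exists: contradiction with hne
    obtain ⟨ρ, hρ0, hρ1, hmap⟩ := hsmall
    have hmapK : ∀ x : ℂ, x ∈ ball (0 : ℂ) ρ \ {(0 : ℂ)} → f x ∈ K := by
      intro x hx
      obtain ⟨hx1, hx2⟩ := hx
      have hx0 : x ≠ 0 := by simpa using hx2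
      exact hmap x hx0 (by simpa [mem_ball_zero_iff] using hx1)
    have hsub : ball (0 : ℂ) ρ \ {(0 : ℂ)} ⊆ ball (0 : ℂ) 1 \ {(0 : ℂ)} := by
      intro x hx
      exact ⟨ball_subset_ball hρ1.le hx.1, hx.2⟩
    have hFd : DifferentiableOn ℂ F (ball (0 : ℂ) ρ \ {(0 : ℂ)}) := by
      intro x hx
      exact (hFdiff x (hsub hx) (hKS (hmapK x hx))).differentiableWithinAt
    have hFb : BddAbove (norm ∘ F '' (ball (0 : ℂ) ρ \ {(0 : ℂ)})) := by
      obtain ⟨C, hC⟩ := (hKcomp.image_of_continuousOn hchc).isBounded.exists_norm_le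
      refine ⟨C, ?_⟩
      rintro t ⟨x, hx, rfl⟩
      exact hC (ch (f x)) (mem_image_of_mem ch (hmapK x hx))
    have hball : ball (0 : ℂ) ρ ∈ 𝓝 (0 : ℂ) := isOpen_ball.mem_nhds (mem_ball_self hρ0)
    have hupd := Complex.differentiableOn_update_limUnder_of_bddAbove hball
      (by simpa using hFd) (by simpa using hFb)
    set y₀ := limUnder (𝓝[≠] (0 : ℂ)) F with hy₀def
    set Ft := Function.update F 0 y₀ with hFt
    have hFt0 : Ft 0 = y₀ := Function.update_self 0 y₀ F
    have hFteq : ∀ x : ℂ, x ≠ 0 → Ft x = F x := fun x hx => Function.update_of_ne hx y₀ F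
    have hFtd : DifferentiableOn ℂ Ft (ball (0 : ℂ) ρ) := hupd
    have hFtd0 : DifferentiableAt ℂ Ft 0 := (hFtd.differentiableAt hball)
    have hy₀K : y₀ ∈ ch '' K := by
      have hclosed : IsClosed (ch '' K) := (hKcomp.image_of_continuousOn hchc).isClosed
      have htend : Tendsto Ft (𝓝 (0 : ℂ)) (𝓝 y₀) := by
        rw [← hFt0]
        exact hFtd0.continuousAt
      have htend' : Tendsto Ft (𝓝[≠] (0 : ℂ)) (𝓝 y₀) := htend.mono_left nhdsWithin_le_nhds
      refine hclosed.mem_of_tendsto htend' ?_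
      filter_upwards [self_mem_nhdsWithin,
        mem_nhdsWithin_of_mem_nhds hball] with x hx1 hx2
      rw [hFteq x hx1]
      exact mem_image_of_mem ch (hmapK x ⟨hx2, by simpa using hx1⟩)
    have hy₀T : y₀ ∈ ch.target := by
      obtain ⟨p, hp, hpe⟩ := hy₀K
      rw [← hpe]
      exact ch.map_source (hKS hp)
    set g : ℂ → V := Function.update f 0 (ch.symm y₀) with hg
    have hgeq : Set.EqOn g f (ball (0 : ℂ) 1 \ {(0 : ℂ)}) := by
      intro x hx
      exact Function.update_of_ne (by simpa using hx.2) _ f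
    refine hne ⟨g, ?_, hgeq⟩
    intro x hx
    by_cases hx0 : x = 0
    · subst hx0
      -- near 0, g agrees with ch.symm ∘ Ft
      have hEq : ∀ᶠ y in 𝓝 (0 : ℂ), g y = ch.symm (Ft y) := by
        filter_upwards [hball] with y hy
        by_cases hy0 : y = 0
        · subst hy0
          simp [hg, hFt0]
        · have h1 : g y = f y := Function.update_of_ne hy0 _ f
          have h2 : Ft y = ch (f y) := hFteq y hy0
          rw [h1, h2, ch.left_inv (hKS (hmapK y ⟨hy, by simpa using hy0⟩))]
      have hcomp : MDifferentiableAt 𝓘(ℂ, ℂ) 𝓘(ℂ, E) (fun y => ch.symm (Ft y)) 0 := by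
        have hF0 : MDifferentiableAt 𝓘(ℂ, ℂ) 𝓘(ℂ, E) Ft 0 := hFtd0.mdifferentiableAt
        have h1 : ContMDiffOn 𝓘(ℂ, E) 𝓘(ℂ, E) 1 ch.symm ch.target :=
          contMDiffOn_extChartAt_symm (I := 𝓘(ℂ, E)) L
        have h2 : MDifferentiableAt 𝓘(ℂ, E) 𝓘(ℂ, E) ch.symm (Ft 0) := by
          rw [hFt0]
          exact ((h1 y₀ hy₀T).mdifferentiableWithinAt one_ne_zero).mdifferentiableAt
            ((isOpen_extChartAt_target L).mem_nhds hy₀T)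
        exact h2.comp 0 hF0
      have : MDifferentiableAt 𝓘(ℂ, ℂ) 𝓘(ℂ, E) g 0 := hcomp.congr_of_eventuallyEq hEq
      exact this.mdifferentiableWithinAt
    · have hmem : ball (0 : ℂ) 1 \ {(0 : ℂ)} ∈ 𝓝 x := hopen.mem_nhds ⟨hx, by simpa using hx0⟩
      have hfx : MDifferentiableAt 𝓘(ℂ, ℂ) 𝓘(ℂ, E) f x := hf.mdifferentiableAt hmem
      have hEq : ∀ᶠ y in 𝓝 x, g y = f y := by
        filter_upwards [isOpen_compl_singleton.mem_nhds (by simpa using hx0 :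
          x ∈ ({(0 : ℂ)}ᶜ : Set ℂ))] with y hy
        exact Function.update_of_ne (by simpa using hy) _ f
      exact (hfx.congr_of_eventuallyEq hEq).mdifferentiableWithinAt
  · -- main branch
    push_neg at hsmall
    -- Step 1: subsequence of z with circle diameters → 0
    have hlim1 := hcon z hzmem hz ⟨L, hL⟩
    obtain ⟨φ₁, hφ₁, hdiam1'⟩ := exists_subseq_tendsto_zero' hlim1
    set z' : ℕ → ℂ := fun k => z (φ₁ k) with hz'def
    have hdiam1 : Tendsto (fun k => EMetric.diam
        (f '' {ζ : ℂ | ‖ζ‖ = ‖z' k‖})) atTop (𝓝 0) := hdiam1'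
    have hz'mem : ∀ k, z' k ∈ ball (0 : ℂ) 1 \ {0} := fun k => hzmem (φ₁ k)
    have hz'0 : Tendsto z' atTop (𝓝 0) := hz.comp hφ₁.tendsto_atTop
    have hfz' : Tendsto (fun k => f (z' k)) atTop (𝓝 L) := hL.comp hφ₁.tendsto_atTop
    have hsabs : Tendsto (fun k => ‖z' k‖) atTop (𝓝 0) := by
      have h := (continuous_norm.tendsto (0 : ℂ)).comp hz'0
      simpa [Function.comp_def] using h
    have hcircle : ∀ ε : ℝ, 0 < ε → ∀ᶠ k in atTop,
        ∀ y : ℂ, ‖y‖ = ‖z' k‖ → dist (f y) L < ε := by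
      intro ε hε
      have h1 : ∀ᶠ k in atTop, EMetric.diam
          (f '' {ζ : ℂ | ‖ζ‖ = ‖z' k‖}) ≤ ENNReal.ofReal (ε / 3) :=
        ENNReal.tendsto_nhds_zero.mp hdiam1 _ (ENNReal.ofReal_pos.2 (by linarith))
      have h2 : ∀ᶠ k in atTop, dist (f (z' k)) L < ε / 3 :=
        Metric.tendsto_nhds.mp hfz' _ (by linarith)
      filter_upwards [h1, h2] with k hk1 hk2 y hy
      have hmem1 : f y ∈ f '' {ζ : ℂ | ‖ζ‖ = ‖z' k‖} :=
        mem_image_of_mem f hy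
      have hmem2 : f (z' k) ∈ f '' {ζ : ℂ | ‖ζ‖ = ‖z' k‖} :=
        mem_image_of_mem f rfl
      have hedist : edist (f y) (f (z' k)) ≤ ENNReal.ofReal (ε / 3) :=
        le_trans (EMetric.edist_le_diam_of_mem hmem1 hmem2) hk1
      rw [edist_dist] at hedist
      have hdist : dist (f y) (f (z' k)) ≤ ε / 3 :=
        (ENNReal.ofReal_le_ofReal_iff (by linarith)).mp hedist
      calc dist (f y) L ≤ dist (f y) (f (z' k)) + dist (f (z' k)) L := dist_triangle _ _ _
        _ < ε := by linarith
    -- select outer radii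
    have hsel : ∀ m : ℕ, ∃ k : ℕ, ‖z' k‖ < 1 / (m + 1) ∧
        ∀ y : ℂ, ‖y‖ = ‖z' k‖ →
          dist (f y) L < min r₀ (1 / (m + 1)) := by
      intro m
      have hm : (0 : ℝ) < 1 / (m + 1) := by positivity
      have h1 : ∀ᶠ k in atTop, ‖z' k‖ < 1 / (m + 1) :=
        hsabs.eventually_lt_const hm
      have h2 := hcircle (min r₀ (1 / (m + 1))) (lt_min hr₀pos hm)
      exact (h1.and h2).exists
    choose κ hκ1 hκ2 using hsel
    set σ : ℕ → ℝ := fun m => ‖z' (κ m)‖ with hσdef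
    have hσpos : ∀ m, 0 < σ m := fun m => ((hmem_iff _).mp (hz'mem (κ m))).1
    have hσlt1 : ∀ m, σ m < 1 := fun m => ((hmem_iff _).mp (hz'mem (κ m))).2
    have hσsmall : ∀ m, σ m < 1 / (m + 1) := hκ1
    have houterσ : ∀ m, ∀ y : ℂ, ‖y‖ = σ m →
        dist (f y) L < min r₀ (1 / (m + 1)) := hκ2
    -- exit construction
    have hexit : ∀ m : ℕ, ∃ (u : ℝ) (x : ℂ), 0 < u ∧ u < σ m ∧ ‖x‖ = u ∧
        dist (f x) L = r₀ ∧
        ∀ y : ℂ, u ≤ ‖y‖ → ‖y‖ ≤ σ m → dist (f y) L ≤ r₀ := by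
      intro m
      obtain ⟨ζ, hζ0, hζσ, hζK⟩ := hsmall (σ m) (hσpos m) (hσlt1 m)
      have hζdist : r₀ < dist (f ζ) L := by
        by_contra h
        exact hζK (mem_closedBall.mpr (not_lt.mp h))
      have hζpos : 0 < ‖ζ‖ := by
        simpa [norm_pos_iff] using hζ0
      set An : Set ℂ := {y : ℂ | ‖ζ‖ ≤ ‖y‖ ∧ ‖y‖ ≤ σ m}
        with hAndef
      have hAnsub : An ⊆ ball (0 : ℂ) 1 \ {0} := by
        intro y hy
        exact (hmem_iff y).mpr ⟨lt_of_lt_of_le hζpos hy.1, lt_of_le_of_lt hy.2 (hσlt1 m)⟩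
      have hAnclosed : IsClosed An :=
        (isClosed_le continuous_const continuous_norm).inter
          (isClosed_le continuous_norm continuous_const)
      have hAncomp : IsCompact An := by
        refine (isCompact_closedBall (0 : ℂ) (σ m)).of_isClosed_subset hAnclosed ?_
        intro y hy
        simpa [Complex.dist_eq] using hy.2
      set C : Set ℂ := An ∩ (fun y => dist (f y) L) ⁻¹' Ici r₀ with hCdef
      have hCclosed : IsClosed C :=
        ContinuousOn.preimage_isClosed_of_isClosed
          ((continuous_id.dist continuous_const).comp_continuousOn (hfc.mono hAnsub))
          hAnclosed isClosed_Ici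
      have hCcomp : IsCompact C := hAncomp.of_isClosed_subset hCclosed inter_subset_left
      set A : Set ℝ := norm '' C with hAdef
      have hζC : ζ ∈ C := ⟨⟨le_refl _, hζσ.le⟩, hζdist.le⟩
      have hAne : ‖ζ‖ ∈ A := mem_image_of_mem _ hζC
      have hAcomp : IsCompact A := hCcomp.image continuous_norm
      have hAbdd : BddAbove A := hAcomp.bddAbove
      obtain ⟨x, hxC, hxabs⟩ := hAcomp.sSup_mem ⟨_, hAne⟩
      set u : ℝ := sSup A with hudef
      have hζu : ‖ζ‖ ≤ u := le_csSup hAbdd hAne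
      have hupos : 0 < u := lt_of_lt_of_le hζpos hζu
      have huσ : u ≤ σ m := hxabs ▸ hxC.1.2
      have hxge : r₀ ≤ dist (f x) L := hxC.2
      have hult : u < σ m := by
        rcases lt_or_eq_of_le huσ with h | h
        · exact h
        · exfalso
          have := houterσ m x (by rw [hxabs, h])
          have h2 : dist (f x) L < r₀ := lt_of_lt_of_le this (min_le_left _ _)
          linarith
      have houter_gt : ∀ y : ℂ, u < ‖y‖ → ‖y‖ ≤ σ m →
          dist (f y) L < r₀ := by
        intro y hy1 hy2
        by_contra h
        have hyC : y ∈ C := ⟨⟨le_trans hζu hy1.le, hy2⟩, not_lt.mp h⟩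
        have : ‖y‖ ≤ u := le_csSup hAbdd (mem_image_of_mem _ hyC)
        exact absurd hy1 (not_lt.mpr this)
      have hbd : ∀ y : ℂ, ‖y‖ = u → dist (f y) L ≤ r₀ := by
        intro y hy
        have hymem : y ∈ ball (0 : ℂ) 1 \ {0} :=
          (hmem_iff y).mpr ⟨hy ▸ hupos, hy ▸ lt_trans hult (hσlt1 m)⟩
        set t : ℕ → ℝ := fun j => u + (σ m - u) / (j + 1) with htdef
        set Y : ℕ → ℂ := fun j => (((t j / u : ℝ)) : ℂ) * y with hYdef
        have htpos : ∀ j : ℕ, u < t j ∧ t j ≤ σ m := by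
          intro j
          constructor
          · have h0 : (0 : ℝ) < (σ m - u) / (j + 1) :=
              div_pos (by linarith) (by positivity)
            simp only [htdef]
            linarith
          · have h1 : (σ m - u) / (j + 1) ≤ σ m - u := by
              apply div_le_self (by linarith)
              have hj : (0 : ℝ) ≤ (j : ℝ) := Nat.cast_nonneg j
              linarith
            simp only [htdef]
            linarith
        have hYabs : ∀ j, ‖Y j‖ = t j := by
          intro j
          have h1 : (0 : ℝ) ≤ t j / u := by
            have h2 := (htpos j).1
            have : (0 : ℝ) ≤ t j := by linarith
            positivity
          simp only [hYdef, norm_mul, Complex.norm_real, Real.norm_eq_abs, hy, abs_of_nonneg h1]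
          field_simp
        have hYlt : ∀ j, dist (f (Y j)) L < r₀ := fun j =>
          houter_gt (Y j) (by rw [hYabs j]; exact (htpos j).1)
            (by rw [hYabs j]; exact (htpos j).2)
        have hYtend : Tendsto Y atTop (𝓝 y) := by
          have h1 : Tendsto t atTop (𝓝 u) := by
            have h2 : Tendsto (fun j : ℕ => (σ m - u) / (j + 1)) atTop (𝓝 0) := by
              have h3 : Tendsto (fun j : ℕ => (1 : ℝ) / (j + 1)) atTop (𝓝 0) :=
                tendsto_one_div_add_atTop_nhds_zero_nat
              have h4 := h3.const_mul (σ m - u)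
              simpa [div_eq_mul_inv, mul_comm, mul_assoc, mul_left_comm] using h4
            have := tendsto_const_nhds.add h2 (f := fun _ : ℕ => u) (x := atTop)
            simpa using this
          have h5 : Tendsto (fun j => t j / u) atTop (𝓝 1) := by
            have := h1.div_const u
            simpa [div_self hupos.ne'] using this
          have h6 : Tendsto (fun j => ((t j / u : ℝ) : ℂ)) atTop (𝓝 ((1 : ℝ) : ℂ)) :=
            (Complex.continuous_ofReal.tendsto _).comp h5
          have h7 := h6.mul_const y
          simpa only [Complex.ofReal_one, one_mul] using h7
        have hfy : ContinuousAt f y := hfc.continuousAt (hopen.mem_nhds hymem)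
        have hdtend : Tendsto (fun j => dist (f (Y j)) L) atTop (𝓝 (dist (f y) L)) :=
          ((hfy.tendsto.comp hYtend).dist tendsto_const_nhds)
        exact le_of_tendsto hdtend (Filter.Eventually.of_forall fun j => (hYlt j).le)
      have hxdist : dist (f x) L = r₀ := le_antisymm (hbd x hxabs) hxge
      refine ⟨u, x, hupos, hult, hxabs, hxdist, ?_⟩
      intro y hy1 hy2
      rcases eq_or_lt_of_le hy1 with h | h
      · exact hbd y h.symm
      · exact (houter_gt y h hy2).le
    choose u x hupos huσ hxabs hxdist hann using hexit
    have hxmem : ∀ m, x m ∈ ball (0 : ℂ) 1 \ {0} := by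
      intro m
      refine (hmem_iff _).mpr ⟨?_, ?_⟩
      · rw [hxabs m]; exact hupos m
      · rw [hxabs m]; exact lt_trans (huσ m) (hσlt1 m)
    have hfxK : ∀ m, f (x m) ∈ K := fun m => mem_closedBall.mpr (hxdist m).le
    obtain ⟨q, hqK, ψ₂, hψ₂, hq⟩ := hKcomp.tendsto_subseq hfxK
    have hqdist : dist q L = r₀ := by
      have h1 : Tendsto (fun j => dist (f (x (ψ₂ j))) L) atTop (𝓝 (dist q L)) := by
        have h := hq.dist (tendsto_const_nhds : Tendsto _ atTop (𝓝 L))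
        simpa [Function.comp_def] using h
      have h2 : (fun j => dist (f (x (ψ₂ j))) L) = fun _ : ℕ => r₀ :=
        funext fun j => hxdist (ψ₂ j)
      rw [h2] at h1
      exact tendsto_nhds_unique h1 tendsto_const_nhds
    have hqne : q ≠ L := by
      intro h
      rw [h] at hqdist
      simp [dist_self] at hqdist
      linarith [hr₀pos]
    have hu0 : Tendsto u atTop (𝓝 0) :=
      tendsto_of_tendsto_of_tendsto_of_le_of_le tendsto_const_nhds
        tendsto_one_div_add_atTop_nhds_zero_nat
        (fun m => (hupos m).le) (fun m => (lt_trans (huσ m) (hσsmall m)).le)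
    have hx0 : Tendsto x atTop (𝓝 0) := by
      rw [tendsto_zero_iff_norm_tendsto_zero]
      have h : (fun m => ‖x m‖) = u := funext fun m => by
        rw [hxabs m]
      rw [h]
      exact hu0
    have hlim3 := hcon (fun j => x (ψ₂ j)) (fun j => hxmem (ψ₂ j))
      (hx0.comp hψ₂.tendsto_atTop) ⟨q, by simpa [Function.comp_def] using hq⟩
    obtain ⟨φ₃, hφ₃, hdiam3'⟩ := exists_subseq_tendsto_zero' hlim3
    set M : ℕ → ℕ := fun i => ψ₂ (φ₃ i) with hMdef
    have hdiam3 : Tendsto (fun i => EMetric.diam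
        (f '' {ζ : ℂ | ‖ζ‖ = ‖x (M i)‖})) atTop (𝓝 0) := by
      simpa [Function.comp_def] using hdiam3'
    have hfq3 : Tendsto (fun i => f (x (M i))) atTop (𝓝 q) := by
      have h := hq.comp hφ₃.tendsto_atTop
      simpa [Function.comp_def] using h
    have hMi : ∀ i : ℕ, i ≤ M i := fun i => le_trans hφ₃.le_apply hψ₂.le_apply
    have hinner : ∀ ε : ℝ, 0 < ε → ∀ᶠ i in atTop,
        ∀ y : ℂ, ‖y‖ = u (M i) → dist (f y) q < ε := by
      intro ε hε
      have h1 : ∀ᶠ i in atTop, EMetric.diam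
          (f '' {ζ : ℂ | ‖ζ‖ = ‖x (M i)‖})
            ≤ ENNReal.ofReal (ε / 3) :=
        ENNReal.tendsto_nhds_zero.mp hdiam3 _ (ENNReal.ofReal_pos.2 (by linarith))
      have h2 : ∀ᶠ i in atTop, dist (f (x (M i))) q < ε / 3 :=
        Metric.tendsto_nhds.mp hfq3 _ (by linarith)
      filter_upwards [h1, h2] with i hi1 hi2 y hy
      have hy' : ‖y‖ = ‖x (M i)‖ := by rw [hy, hxabs (M i)]
      have hmem1 : f y ∈ f '' {ζ : ℂ | ‖ζ‖ = ‖x (M i)‖} :=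
        mem_image_of_mem f hy'
      have hmem2 : f (x (M i)) ∈ f '' {ζ : ℂ | ‖ζ‖ = ‖x (M i)‖} :=
        mem_image_of_mem f rfl
      have hed := le_trans (EMetric.edist_le_diam_of_mem hmem1 hmem2) hi1
      rw [edist_dist] at hed
      have hdd : dist (f y) (f (x (M i))) ≤ ε / 3 :=
        (ENNReal.ofReal_le_ofReal_iff (by linarith)).mp hed
      calc dist (f y) q ≤ dist (f y) (f (x (M i))) + dist (f (x (M i))) q :=
            dist_triangle _ _ _
        _ < ε := by linarith
    have houteri : ∀ ε : ℝ, 0 < ε → ∀ᶠ i in atTop,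
        ∀ y : ℂ, ‖y‖ = σ (M i) → dist (f y) L < ε := by
      intro ε hε
      have h1 : ∀ᶠ i : ℕ in atTop, (1 : ℝ) / (i + 1) < ε :=
        tendsto_one_div_add_atTop_nhds_zero_nat.eventually_lt_const hε
      filter_upwards [h1] with i hi y hy
      have h2 := houterσ (M i) y hy
      have h3 : (1 : ℝ) / (M i + 1) ≤ 1 / (i + 1) := by
        apply one_div_le_one_div_of_le (by positivity)
        have h4 : (i : ℝ) ≤ (M i : ℝ) := Nat.cast_le.mpr (hMi i)
        linarith
      calc dist (f y) L < min r₀ (1 / (M i + 1)) := h2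
        _ ≤ 1 / (M i + 1) := min_le_right _ _
        _ ≤ 1 / (i + 1) := h3
        _ < ε := hi
    have hannK : ∀ m, ∀ y : ℂ, u m ≤ ‖y‖ → ‖y‖ ≤ σ m → f y ∈ K :=
      fun m y h1 h2 => mem_closedBall.mpr (hann m y h1 h2)
    have hannB : ∀ m, ∀ y : ℂ, u m ≤ ‖y‖ → ‖y‖ ≤ σ m →
        y ∈ ball (0 : ℂ) 1 \ {0} := fun m y h1 h2 =>
      (hmem_iff y).mpr ⟨lt_of_lt_of_le (hupos m) h1, lt_of_le_of_lt h2 (hσlt1 m)⟩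
    have hFdiffAnn : ∀ m, ∀ y : ℂ, u m ≤ ‖y‖ → ‖y‖ ≤ σ m →
        DifferentiableAt ℂ (fun w : ℂ => w⁻¹ • F w) y := by
      intro m y h1 h2
      have hy0 : y ≠ 0 := by
        intro h
        rw [h] at h1
        simp at h1
        linarith [hupos m]
      exact (differentiableAt_inv hy0).smul
        (hFdiff y (hannB m y h1 h2) (hKS (hannK m y h1 h2)))
    have hsphere_abs : ∀ (r : ℝ) (y : ℂ), y ∈ sphere (0 : ℂ) r → ‖y‖ = r := by
      intro r y hy
      simpa [Complex.dist_eq] using hy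
    have hIeq : ∀ i, (∮ z in C((0 : ℂ), σ (M i)), z⁻¹ • F z)
        = ∮ z in C((0 : ℂ), u (M i)), z⁻¹ • F z := by
      intro i
      apply Complex.circleIntegral_eq_of_differentiable_on_annulus_off_countable
        (hupos (M i)) (huσ (M i)).le countable_empty
      · intro y hy
        obtain ⟨hy1, hy2⟩ := hy
        rw [mem_closedBall_zero_iff] at hy1
        rw [mem_ball_zero_iff] at hy2
        exact ((hFdiffAnn (M i) y (not_lt.mp hy2) hy1).continuousAt).continuousWithinAt
      · intro y hy
        obtain ⟨⟨hy1, hy2⟩, -⟩ := hy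
        rw [mem_ball_zero_iff] at hy1
        rw [mem_closedBall_zero_iff] at hy2
        exact hFdiffAnn (M i) y ((not_le.mp hy2)).le hy1.le
    have hIbnd : ∀ (r : ℝ) (p : V), 0 < r → r < 1 → p ∈ K →
        (∀ y : ℂ, ‖y‖ = r → f y ∈ K) → ∀ ε : ℝ, 0 < ε →
        (∀ y : ℂ, ‖y‖ = r → ‖F y - ch p‖ ≤ ε) →
        ‖(∮ z in C((0 : ℂ), r), z⁻¹ • F z) - (2 * Real.pi * Complex.I : ℂ) • ch p‖
          ≤ 2 * Real.pi * ε := by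
      intro r p hr hr1 hpK hfyK ε hε hbound
      have habs0 : ∀ y : ℂ, y ∈ sphere (0 : ℂ) r → y ≠ 0 := by
        intro y hy h0
        have := hsphere_abs r y hy
        rw [h0] at this
        simp at this
        linarith
      have hdiffS : ∀ y : ℂ, y ∈ sphere (0 : ℂ) r →
          DifferentiableAt ℂ (fun z : ℂ => z⁻¹ • F z) y := by
        intro y hy
        have hab := hsphere_abs r y hy
        have hymem : y ∈ ball (0 : ℂ) 1 \ {0} :=
          (hmem_iff y).mpr ⟨hab ▸ hr, hab ▸ hr1⟩
        exact (differentiableAt_inv (habs0 y hy)).smul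
          (hFdiff y hymem (hKS (hfyK y hab)))
      have hcont : ContinuousOn (fun z : ℂ => z⁻¹ • F z) (sphere (0 : ℂ) r) :=
        fun y hy => ((hdiffS y hy).continuousAt).continuousWithinAt
      have hint1 : CircleIntegrable (fun z : ℂ => z⁻¹ • F z) 0 r :=
        hcont.circleIntegrable hr.le
      have hint2 : CircleIntegrable (fun z : ℂ => z⁻¹ • ch p) 0 r := by
        apply ContinuousOn.circleIntegrable hr.le
        refine ContinuousOn.smul ?_ continuousOn_const
        exact fun y hy => (continuousAt_inv₀ (habs0 y hy)).continuousWithinAt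
      have hconst : (∮ z in C((0 : ℂ), r), z⁻¹ • ch p)
          = (2 * Real.pi * Complex.I : ℂ) • ch p := by
        rw [circleIntegral.integral_smul_const]
        congr 1
        have h := circleIntegral.integral_sub_inv_of_mem_ball
          (c := (0 : ℂ)) (w := (0 : ℂ)) (R := r) (by simpa using hr)
        simpa using h
      have hsplit : (∮ z in C((0 : ℂ), r), z⁻¹ • F z)
            - (2 * Real.pi * Complex.I : ℂ) • ch p
          = ∮ z in C((0 : ℂ), r), (z⁻¹ • F z - z⁻¹ • ch p) := by
        rw [circleIntegral.integral_sub hint1 hint2, hconst]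
      rw [hsplit]
      have hb2 : ∀ y ∈ sphere (0 : ℂ) r, ‖y⁻¹ • F y - y⁻¹ • ch p‖ ≤ ε / r := by
        intro y hy
        have hab := hsphere_abs r y hy
        rw [← smul_sub, norm_smul, norm_inv, hab]
        calc r⁻¹ * ‖F y - ch p‖ ≤ r⁻¹ * ε := by
              have := hbound y hab
              gcongr
          _ = ε / r := by rw [div_eq_mul_inv, mul_comm]
      calc ‖∮ z in C((0 : ℂ), r), (z⁻¹ • F z - z⁻¹ • ch p)‖
          ≤ 2 * Real.pi * r * (ε / r) :=
            circleIntegral.norm_integral_le_of_norm_le_const hr.le hb2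
        _ = 2 * Real.pi * ε := by field_simp
    have hKey : ∀ ε : ℝ, 0 < ε → dist (ch L) (ch q) ≤ 2 * ε := by
      intro ε hε
      obtain ⟨δ, hδpos, hδ⟩ := Metric.uniformContinuousOn_iff.mp hUC ε hε
      obtain ⟨i, hi1, hi2⟩ := ((hinner δ hδpos).and (houteri δ hδpos)).exists
      have hbnd1 : ∀ y : ℂ, ‖y‖ = u (M i) → ‖F y - ch q‖ ≤ ε := by
        intro y hy
        have hfyK : f y ∈ K := hannK (M i) y hy.ge (hy.le.trans (huσ (M i)).le)
        have hd := hδ (f y) hfyK q hqK (hi1 y hy)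
        rw [dist_eq_norm] at hd
        exact hd.le
      have hbnd2 : ∀ y : ℂ, ‖y‖ = σ (M i) → ‖F y - ch L‖ ≤ ε := by
        intro y hy
        have hfyK : f y ∈ K := hannK (M i) y ((huσ (M i)).le.trans hy.ge) hy.le
        have hd := hδ (f y) hfyK L (mem_closedBall_self hr₀pos.le) (hi2 y hy)
        rw [dist_eq_norm] at hd
        exact hd.le
      have h1 := hIbnd (u (M i)) q (hupos _) (lt_trans (huσ _) (hσlt1 _)) hqK
        (fun y hy => hannK _ y hy.ge (hy.le.trans (huσ _).le)) ε hε hbnd1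
      have h2 := hIbnd (σ (M i)) L (hσpos _) (hσlt1 _) (mem_closedBall_self hr₀pos.le)
        (fun y hy => hannK _ y ((huσ _).le.trans hy.ge) hy.le) ε hε hbnd2
      have heqI := hIeq i
      set c2 : ℂ := 2 * Real.pi * Complex.I with hc2def
      have hc2 : ‖c2‖ = 2 * Real.pi := by
        rw [hc2def]
        simp [Complex.norm_real, Complex.norm_I, abs_of_pos Real.pi_pos]
      have hkey2 : ‖c2 • ch L - c2 • ch q‖ ≤ 2 * Real.pi * ε + 2 * Real.pi * ε := by
        have hrw : c2 • ch L - c2 • ch q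
            = -((∮ z in C((0 : ℂ), σ (M i)), z⁻¹ • F z) - c2 • ch L)
              + ((∮ z in C((0 : ℂ), u (M i)), z⁻¹ • F z) - c2 • ch q) := by
          rw [heqI]
          abel
        rw [hrw]
        refine le_trans (norm_add_le _ _) ?_
        rw [norm_neg]
        exact add_le_add h2 h1
      have hfin : 2 * Real.pi * dist (ch L) (ch q)
          ≤ 2 * Real.pi * ε + 2 * Real.pi * ε := by
        rw [dist_eq_norm]
        calc 2 * Real.pi * ‖ch L - ch q‖ = ‖c2‖ * ‖ch L - ch q‖ := by rw [hc2]
          _ = ‖c2 • (ch L - ch q)‖ := (norm_smul _ _).symm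
          _ = ‖c2 • ch L - c2 • ch q‖ := by rw [smul_sub]
          _ ≤ _ := hkey2
      nlinarith [Real.pi_pos]
    have hd0 : dist (ch L) (ch q) ≤ 0 := by
      by_contra hpos
      push_neg at hpos
      have := hKey (dist (ch L) (ch q) / 4) (by linarith)
      linarith
    have hcheq : ch L = ch q := by
      have h := le_antisymm hd0 dist_nonneg
      exact dist_le_zero.mp hd0
    exact hqne (ch.injOn (hKS hqK) hLS hcheq.symm)

end
end

section
/- Let D be a nonempty open connected subset of ℂ, let V be a compact connected complex manifold equipped with an admissible metric δ, and let F be a family of holomorphic maps from D to V. Then F is normal on D if and only if for every a ∈ D and every r > 0 such that the closed disc {z : |z − a| ≤ r} is contained in D, one has sup_{f ∈ F} L_{f,𝔻(a,r)} < ∞. -/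
open Filter Metric Set Topology
open scoped Manifold ENNReal UniformConvergence

noncomputable section

lemma arctanh_nonneg {x : ℝ} (h0 : 0 ≤ x) (h1 : x < 1) : 0 ≤ arctanh x := by
  have : (1:ℝ) ≤ (1 + x) / (1 - x) := by
    rw [le_div_iff₀ (by linarith)]; linarith
  have := Real.log_nonneg this
  unfold arctanh; linarith

lemma arctanh_pos {x : ℝ} (h0 : 0 < x) (h1 : x < 1) : 0 < arctanh x := by
  have : (1:ℝ) < (1 + x) / (1 - x) := by
    rw [lt_div_iff₀ (by linarith)]; linarith
  have := Real.log_pos this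
  unfold arctanh; linarith

lemma arctanh_le_two_mul {x : ℝ} (h0 : 0 ≤ x) (h1 : x ≤ 1/2) : arctanh x ≤ 2 * x := by
  have hne : (1:ℝ) - x > 0 := by linarith
  have hpos : (0:ℝ) < (1 + x) / (1 - x) := by positivity
  have := Real.log_le_sub_one_of_pos hpos
  have h2 : (1 + x) / (1 - x) - 1 = 2 * x / (1 - x) := by
    field_simp; ring
  have h3 : 2 * x / (1 - x) ≤ 4 * x := by
    rw [div_le_iff₀ (by linarith)]; nlinarith
  unfold arctanh; linarith

lemma le_two_mul_arctanh {x : ℝ} (h0 : 0 ≤ x) (h1 : x < 1) : x ≤ 2 * arctanh x := by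
  have hne : (1:ℝ) - x > 0 := by linarith
  have hpos : (0:ℝ) < (1 - x) / (1 + x) := by positivity
  have hlog := Real.log_le_sub_one_of_pos hpos
  have h2 : (1 - x) / (1 + x) - 1 = -(2 * x / (1 + x)) := by field_simp; ring
  have h4 : Real.log ((1 + x)/(1 - x)) = - Real.log ((1 - x)/(1 + x)) := by
    rw [← Real.log_inv]; congr 1; field_simp
  have h3 : x ≤ 2 * x / (1 + x) := by
    rw [le_div_iff₀ (by linarith)]; nlinarith
  unfold arctanh; rw [h4]; linarith

lemma normSq_key (c v : ℂ) :
    Complex.normSq (1 - (starRingEnd ℂ) c * v) - Complex.normSq (c - v)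
      = (1 - Complex.normSq c) * (1 - Complex.normSq v) := by
  simp only [Complex.normSq_apply, Complex.sub_re, Complex.sub_im, Complex.mul_re,
    Complex.mul_im, Complex.one_re, Complex.one_im, Complex.conj_re, Complex.conj_im]
  ring

lemma abs_key {c v : ℂ} (hc : ‖c‖ < 1) (hv : ‖v‖ < 1) :
    ‖c - v‖ < ‖1 - (starRingEnd ℂ) c * v‖ := by
  have h1 : Complex.normSq c < 1 := by
    have := Complex.sq_norm c; nlinarith [norm_nonneg c]
  have h2 : Complex.normSq v < 1 := by
    have := Complex.sq_norm v; nlinarith [norm_nonneg v]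
  have h3 := normSq_key c v
  have h4 : Complex.normSq (c - v) < Complex.normSq (1 - (starRingEnd ℂ) c * v) := by
    nlinarith [Complex.normSq_nonneg c, Complex.normSq_nonneg v]
  have e1 := Complex.sq_norm (c - v)
  have e2 := Complex.sq_norm (1 - (starRingEnd ℂ) c * v)
  nlinarith [norm_nonneg (c - v), norm_nonneg (1 - (starRingEnd ℂ) c * v)]

lemma mem_ball_iff_abs {a z : ℂ} {r : ℝ} (hr : 0 < r) :
    z ∈ ball a r ↔ ‖(z - a) / r‖ < 1 := by
  rw [mem_ball, Complex.dist_eq, norm_div, Complex.norm_real, Real.norm_eq_abs, abs_of_pos hr, div_lt_one hr]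

lemma discDist_eq {a z w : ℂ} {r : ℝ} (hr : 0 < r) :
    discDist a r z w =
      arctanh (‖((z - a) / r) - ((w - a) / r)‖ /
        ‖1 - (starRingEnd ℂ) ((z - a) / r) * ((w - a) / r)‖) := by
  have hrne : (r : ℂ) ≠ 0 := by exact_mod_cast hr.ne'
  have e1 : z - w = (r : ℂ) * (((z - a) / r) - ((w - a) / r)) := by field_simp; ring
  have e2 : (r : ℂ) ^ 2 - (starRingEnd ℂ) (z - a) * (w - a)
      = (r : ℂ) ^ 2 * (1 - (starRingEnd ℂ) ((z - a) / r) * ((w - a) / r)) := by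
    have : (starRingEnd ℂ) ((z - a) / r) = (starRingEnd ℂ) (z - a) / (r : ℂ) := by
      rw [map_div₀, Complex.conj_ofReal]
    rw [this]; field_simp
  have h2 : ‖(r:ℂ)^2‖ = r^2 := by
    rw [norm_pow, Complex.norm_real, Real.norm_eq_abs, abs_of_pos hr]
  unfold discDist
  rw [e1, e2, norm_mul, norm_mul, Complex.norm_real, Real.norm_eq_abs, abs_of_pos hr, h2]
  congr 1
  set X := ‖(z - a) / (r:ℂ) - (w - a) / (r:ℂ)‖
  set Y := ‖1 - (starRingEnd ℂ) ((z - a) / (r:ℂ)) * ((w - a) / (r:ℂ))‖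
  rw [show r * (r * X) = r ^ 2 * X by ring, mul_div_mul_left _ _ (by positivity : (r:ℝ)^2 ≠ 0)]

lemma discDist_lt_one' {a z w : ℂ} {r : ℝ} (hr : 0 < r) (hz : z ∈ ball a r)
    (hw : w ∈ ball a r) :
    ‖((z - a) / r) - ((w - a) / r)‖ /
      ‖1 - (starRingEnd ℂ) ((z - a) / r) * ((w - a) / r)‖ < 1 := by
  have h := abs_key ((mem_ball_iff_abs hr).mp hz) ((mem_ball_iff_abs hr).mp hw)
  have hpos : 0 < ‖1 - (starRingEnd ℂ) ((z - a) / r) * ((w - a) / r)‖ :=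
    lt_of_le_of_lt (norm_nonneg _) h
  rw [div_lt_one hpos]; exact h

lemma discDist_nonneg {a z w : ℂ} {r : ℝ} (hr : 0 < r) (hz : z ∈ ball a r)
    (hw : w ∈ ball a r) : 0 ≤ discDist a r z w := by
  rw [discDist_eq hr]
  exact arctanh_nonneg (by positivity) (discDist_lt_one' hr hz hw)

lemma discDist_pos {a z w : ℂ} {r : ℝ} (hr : 0 < r) (hz : z ∈ ball a r)
    (hw : w ∈ ball a r) (hne : z ≠ w) : 0 < discDist a r z w := by
  rw [discDist_eq hr]
  refine arctanh_pos ?_ (discDist_lt_one' hr hz hw)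
  have hnum : 0 < ‖((z - a) / r) - ((w - a) / r)‖ := by
    rw [norm_pos_iff, sub_ne_zero]
    intro h
    apply hne
    have hrne : (r : ℂ) ≠ 0 := by exact_mod_cast hr.ne'
    field_simp at h
    linear_combination h
  have h := abs_key ((mem_ball_iff_abs hr).mp hz) ((mem_ball_iff_abs hr).mp hw)
  have hden : 0 < ‖1 - (starRingEnd ℂ) ((z - a) / r) * ((w - a) / r)‖ :=
    lt_of_le_of_lt (norm_nonneg _) h
  exact div_pos hnum hden

lemma discDist_center {a z : ℂ} {r : ℝ} (hr : 0 < r) :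
    discDist a r z a = arctanh (‖z - a‖ / r) := by
  unfold discDist
  congr 1
  rw [sub_self, mul_zero, sub_zero, norm_pow, Complex.norm_real, Real.norm_eq_abs, abs_of_pos hr]
  rw [div_eq_div_iff (by positivity) (by positivity)]
  ring

lemma kobayashiDistOn_le_single {E : Type*} [NormedAddCommGroup E] [NormedSpace ℂ E]
    {M : Type*} [TopologicalSpace M] [ChartedSpace E M] {U : Set M} {h : ℂ → M}
    (hh : MDifferentiableOn 𝓘(ℂ, ℂ) 𝓘(ℂ, E) h (ball (0 : ℂ) 1))
    (him : h '' ball (0 : ℂ) 1 ⊆ U) {z z' : ℂ}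
    (hz : z ∈ ball (0 : ℂ) 1) (hz' : z' ∈ ball (0 : ℂ) 1) :
    kobayashiDistOn E U (h z) (h z') ≤ ENNReal.ofReal (poincareDist z z') := by
  unfold kobayashiDistOn
  refine iInf_le_of_le 0 ?_
  refine iInf_le_of_le (fun _ => h) ?_
  refine iInf_le_of_le (fun _ => (z, z')) ?_
  refine iInf_le_of_le (fun _ => hh) ?_
  refine iInf_le_of_le (fun _ => him) ?_
  refine iInf_le_of_le (fun _ => ⟨hz, hz'⟩) ?_
  refine iInf_le_of_le rfl ?_
  refine iInf_le_of_le rfl ?_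
  refine iInf_le_of_le (fun j => j.elim0) ?_
  simp

lemma poincareDist_zero (z : ℂ) : poincareDist 0 z = arctanh (‖z‖) := by
  unfold poincareDist
  simp

section Mobius
variable {a c : ℂ} {r τ : ℝ}

def mob (a : ℂ) (r τ : ℝ) (c ζ : ℂ) : ℂ :=
  a + r * (((τ : ℂ) * ζ + c) / (1 + (starRingEnd ℂ) c * ((τ : ℂ) * ζ)))

lemma den_lb (hτ0 : 0 ≤ τ) (hτ : τ ≤ 1/2) (hc : ‖c‖ < 1) {ζ : ℂ}
    (hζ : ‖ζ‖ ≤ 1) :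
    1/2 ≤ ‖1 + (starRingEnd ℂ) c * ((τ : ℂ) * ζ)‖ := by
  set d := (starRingEnd ℂ) c * ((τ : ℂ) * ζ) with hd
  have habs : ‖d‖ ≤ 1/2 := by
    rw [hd, norm_mul, norm_mul, Complex.norm_conj, Complex.norm_real, Real.norm_eq_abs, abs_of_nonneg hτ0]
    have h1 : ‖c‖ * (τ * ‖ζ‖) ≤ 1 * (τ * 1) := by
      refine mul_le_mul hc.le ?_ (by positivity) (by norm_num)
      exact mul_le_mul_of_nonneg_left hζ hτ0
    linarith
  have h1 : ‖1 + d + -d‖ ≤ ‖1 + d‖ + ‖-d‖ :=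
    norm_add_le _ _
  simp only [add_neg_cancel_right, norm_one, norm_neg] at h1
  linarith

lemma den_ne (hτ0 : 0 ≤ τ) (hτ : τ ≤ 1/2) (hc : ‖c‖ < 1) {ζ : ℂ}
    (hζ : ‖ζ‖ ≤ 1) :
    (1 : ℂ) + (starRingEnd ℂ) c * ((τ : ℂ) * ζ) ≠ 0 := by
  intro h
  have := den_lb hτ0 hτ hc hζ
  rw [h] at this
  simp at this
  linarith

lemma mob_diff (hτ0 : 0 ≤ τ) (hτ : τ ≤ 1/2) (hc : ‖c‖ < 1) :
    DifferentiableOn ℂ (mob a r τ c) (ball (0 : ℂ) 1) := by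
  unfold mob
  refine (differentiableOn_const a).add (((differentiableOn_const ((r:ℂ))).mul
    (DifferentiableOn.div ?_ ?_ ?_)))
  · exact ((differentiable_const ((τ:ℂ))).mul differentiable_id).add_const c |>.differentiableOn
  · exact ((differentiable_const _).mul ((differentiable_const ((τ:ℂ))).mul
      differentiable_id)).const_add 1 |>.differentiableOn
  · intro ζ hζ
    exact den_ne hτ0 hτ hc (le_of_lt (by simpa using mem_ball_zero_iff.mp hζ))

lemma mob_mem_ball (hr : 0 < r) (hτ0 : 0 < τ) (hτ : τ ≤ 1/2) (hc : ‖c‖ < 1)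
    {ζ : ℂ} (hζ : ζ ∈ ball (0 : ℂ) 1) : mob a r τ c ζ ∈ ball a r := by
  have hζ1 : ‖ζ‖ < 1 := by simpa using mem_ball_zero_iff.mp hζ
  have hτζ : ‖(τ:ℂ) * ζ‖ < 1 := by
    rw [norm_mul, Complex.norm_real, Real.norm_eq_abs, abs_of_pos hτ0]
    nlinarith [norm_nonneg ζ]
  have hkey := abs_key (c := -c) (v := (τ:ℂ) * ζ) (by simpa using hc) hτζ
  have h1 : ‖-c - (τ:ℂ)*ζ‖ = ‖(τ:ℂ)*ζ + c‖ := by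
    rw [show -c - (τ:ℂ)*ζ = -((τ:ℂ)*ζ + c) by ring, norm_neg]
  have h2 : (1 : ℂ) - (starRingEnd ℂ) (-c) * ((τ:ℂ)*ζ)
      = 1 + (starRingEnd ℂ) c * ((τ:ℂ)*ζ) := by
    rw [map_neg]; ring
  rw [h1, h2] at hkey
  have hden : 0 < ‖1 + (starRingEnd ℂ) c * ((τ:ℂ)*ζ)‖ :=
    lt_of_lt_of_le (by norm_num) (den_lb hτ0.le hτ hc hζ1.le)
  rw [mem_ball]
  unfold mob
  rw [Complex.dist_eq, add_sub_cancel_left, norm_mul, norm_div, Complex.norm_real, Real.norm_eq_abs, abs_of_pos hr]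
  calc r * (‖(τ:ℂ)*ζ + c‖ / ‖1 + (starRingEnd ℂ) c * ((τ:ℂ)*ζ)‖)
      < r * 1 := by
        apply mul_lt_mul_of_pos_left _ hr
        rw [div_lt_one hden]; exact hkey
    _ = r := mul_one r

lemma mob_zero : mob a r τ c 0 = a + r * c := by
  unfold mob; simp

lemma mob_near (hr : 0 < r) (hτ0 : 0 < τ) (hτ : τ ≤ 1/2) (hc : ‖c‖ < 1)
    {ζ : ℂ} (hζ : ζ ∈ ball (0 : ℂ) 1) :
    ‖mob a r τ c ζ - (a + r * c)‖ ≤ 2 * r * τ := by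
  have hζ1 : ‖ζ‖ < 1 := by simpa using mem_ball_zero_iff.mp hζ
  have hne := den_ne hτ0.le hτ hc hζ1.le
  have e : mob a r τ c ζ - (a + r * c)
      = (r : ℂ) * ((τ:ℂ) * ζ) * (1 - (starRingEnd ℂ) c * c)
        / (1 + (starRingEnd ℂ) c * ((τ:ℂ) * ζ)) := by
    unfold mob
    linear_combination (↑r * c) * mul_inv_cancel₀ hne
  have h3 : ‖1 - (starRingEnd ℂ) c * c‖ ≤ 1 := by
    have : (starRingEnd ℂ) c * c = (Complex.normSq c : ℂ) := by
      rw [mul_comm, Complex.mul_conj]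
    rw [this]
    have h4 : Complex.normSq c < 1 := by
      have := Complex.sq_norm c; nlinarith [norm_nonneg c]
    have h5 : (0:ℝ) ≤ Complex.normSq c := Complex.normSq_nonneg c
    rw [show (1 : ℂ) - (Complex.normSq c : ℂ) = ((1 - Complex.normSq c : ℝ) : ℂ) by push_cast; ring,
      Complex.norm_real, Real.norm_eq_abs, abs_of_nonneg (by linarith)]
    linarith
  rw [e, norm_div, norm_mul, norm_mul, norm_mul, Complex.norm_real, Complex.norm_real, Real.norm_eq_abs, Real.norm_eq_abs,
    abs_of_pos hr, abs_of_pos hτ0]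
  have hden := den_lb hτ0.le hτ hc hζ1.le
  rw [div_le_iff₀ (by linarith)]
  have hAnn := norm_nonneg (1 - (starRingEnd ℂ) c * c)
  have step1 : r * (τ * ‖ζ‖) * ‖1 - (starRingEnd ℂ) c * c‖ ≤ r * τ := by
    have h6 : τ * ‖ζ‖ ≤ τ * 1 := mul_le_mul_of_nonneg_left hζ1.le hτ0.le
    have h7 : r * (τ * ‖ζ‖) ≤ r * τ := by
      apply mul_le_mul_of_nonneg_left _ hr.le; linarith
    nlinarith [mul_nonneg hr.le (mul_nonneg hτ0.le (norm_nonneg ζ))]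
  have step2 : r * τ ≤ 2 * r * τ * ‖1 + (starRingEnd ℂ) c * ((τ:ℂ) * ζ)‖ := by
    nlinarith [mul_pos hr hτ0]
  linarith

lemma mob_endpoint (hτ0 : 0 < τ) {v' : ℂ} (hc : ‖c‖ < 1)
    (hv' : ‖v'‖ < 1) :
    mob a r τ c ((v' - c) / (1 - (starRingEnd ℂ) c * v') / τ) = a + r * v' := by
  have h1 : (1 : ℂ) - (starRingEnd ℂ) c * v' ≠ 0 := by
    intro h
    have := abs_key hc hv'
    rw [show c - v' = (c - v') by rfl] at this
    rw [h] at this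
    simp at this
    exact absurd this (not_lt.mpr (norm_nonneg _))
  have hτc : ((τ : ℂ)) ≠ 0 := by exact_mod_cast hτ0.ne'
  have h2 : (τ:ℂ) * ((v' - c) / (1 - (starRingEnd ℂ) c * v') / τ)
      = (v' - c) / (1 - (starRingEnd ℂ) c * v') := by
    field_simp
  have hnc : (starRingEnd ℂ) c * c = (Complex.normSq c : ℂ) := by
    rw [mul_comm, Complex.mul_conj]
  have h4 : Complex.normSq c < 1 := by
    have := Complex.sq_norm c; nlinarith [norm_nonneg c]
  have h3 : (1:ℂ) + (starRingEnd ℂ) c * ((v' - c) / (1 - (starRingEnd ℂ) c * v'))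
      = (1 - (starRingEnd ℂ) c * c) / (1 - (starRingEnd ℂ) c * v') := by
    field_simp
    ring
  have h5 : (1:ℂ) - (starRingEnd ℂ) c * c ≠ 0 := by
    rw [hnc]
    intro h
    have : (Complex.normSq c : ℂ) = 1 := by linear_combination -h
    have := Complex.ofReal_injective (by exact_mod_cast this : ((Complex.normSq c : ℝ) : ℂ) = ((1:ℝ):ℂ))
    linarith
  unfold mob
  rw [h2, h3]
  congr 1
  rw [div_div_eq_mul_div]
  have h1' : (1:ℂ) - v' * (starRingEnd ℂ) c ≠ 0 := by rwa [mul_comm]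
  have h5' : (1:ℂ) - c * (starRingEnd ℂ) c ≠ 0 := by rwa [mul_comm]
  field_simp
  ring

end Mobius

set_option maxHeartbeats 2000000 in

lemma forward_dir {E : Type*} [NormedAddCommGroup E] [NormedSpace ℂ E]
    [FiniteDimensional ℂ E]
    (D : Set ℂ) (hD : IsOpen D)
    (V : Type*) [MetricSpace V] [ChartedSpace E V] [IsManifold 𝓘(ℂ, E) (⊤ : WithTop ℕ∞) V]
    [CompactSpace V] (hδ : IsAdmissible E V)
    (F : Set (ℂ → V)) (hF : ∀ f ∈ F, MDifferentiableOn 𝓘(ℂ, ℂ) 𝓘(ℂ, E) f D)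
    (hnorm : NormalOn F D) :
    ∀ a ∈ D, ∀ r : ℝ, 0 < r → closedBall a r ⊆ D →
      (⨆ f ∈ F, LipConst f a r) < ⊤ := by
  intro a _ r hr hKD
  by_contra hcon
  rw [not_lt, top_le_iff] at hcon
  have H : ∀ n : ℕ, ∃ f, ∃ _ : f ∈ F, ∃ w, ∃ _ : w ∈ ball a r, ∃ w', ∃ _ : w' ∈ ball a r,
      ∃ _ : w ≠ w',
      (n : ℝ≥0∞) < ENNReal.ofReal (dist (f w) (f w') / discDist a r w w') := by
    intro n
    have h1 : (n : ℝ≥0∞) < ⨆ f ∈ F, LipConst f a r := by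
      rw [hcon]; exact ENNReal.natCast_lt_top n
    simpa only [LipConst, lt_iSup_iff] using h1
  choose fn hfn wn hwn wn' hwn' hne hlt using H
  have hdpos : ∀ n, 0 < discDist a r (wn n) (wn' n) := fun n =>
    discDist_pos hr (hwn n) (hwn' n) (hne n)
  have hlt' : ∀ n : ℕ,
      (n : ℝ) * discDist a r (wn n) (wn' n) < dist (fn n (wn n)) (fn n (wn' n)) := by
    intro n
    have h2 := hlt n
    rw [← ENNReal.ofReal_natCast n,
      ENNReal.ofReal_lt_ofReal_iff_of_nonneg (Nat.cast_nonneg n)] at h2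
    exact (lt_div_iff₀ (hdpos n)).mp h2
  set Δ := Metric.diam (univ : Set V) with hΔdef
  have hΔ : ∀ p q : V, dist p q ≤ Δ := fun p q =>
    Metric.dist_le_diam_of_mem (isCompact_univ.isBounded) (mem_univ p) (mem_univ q)
  have hΔ0 : 0 ≤ Δ := Metric.diam_nonneg
  -- normality
  obtain ⟨φ₁, hφ₁, g, hg⟩ := hnorm fn hfn
  set K := closedBall a r with hKdef
  have hK : IsCompact K := isCompact_closedBall a r
  have hgK : TendstoUniformlyOn (fun n => fn (φ₁ n)) g atTop K := hg K hKD hK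
  have hgc : ContinuousOn g K := by
    refine hgK.continuousOn (Eventually.of_forall fun n => ?_).frequently
    exact ((hF _ (hfn _)).continuousOn).mono hKD
  obtain ⟨wstar, hwstarK, φ₂, hφ₂, hwtend⟩ :=
    hK.tendsto_subseq (fun k => ball_subset_closedBall (hwn (φ₁ k)))
  set γ : ℕ → ℕ := φ₁ ∘ φ₂ with hγdef
  have hγmono : StrictMono γ := hφ₁.comp hφ₂
  -- admissible data at the limit point
  obtain ⟨U, hU⟩ := hδ
  set x := g wstar with hxdef
  obtain ⟨ε, hε, hball⟩ := Metric.isOpen_iff.mp (hU x).2.1 x (hU x).1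
  -- continuity of g at wstar within K
  obtain ⟨s, hs0, hs⟩ := (Metric.continuousWithinAt_iff.mp (hgc wstar hwstarK)) (ε/2) (by linarith)
  set τ := min (1/2 : ℝ) (s/(8*r)) with hτdef
  have hτ0 : 0 < τ := lt_min (by norm_num) (by positivity)
  have hτhalf : τ ≤ 1/2 := min_le_left _ _
  have hτs : 2*r*τ ≤ s/4 := by
    have := min_le_right (1/2 : ℝ) (s/(8*r))
    calc 2*r*τ ≤ 2*r*(s/(8*r)) := by nlinarith
      _ = s/4 := by field_simp; ring
  -- eventual properties
  have E1 : ∀ᶠ k in atTop, dist (wn (γ k)) wstar < s/4 :=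
    Metric.tendsto_nhds.mp hwtend (s/4) (by positivity)
  have E2 : ∀ᶠ k in atTop, ∀ y ∈ K, dist (g y) (fn (γ k) y) < ε/2 := by
    have h3 := Metric.tendstoUniformlyOn_iff.mp hgK (ε/2) (by linarith)
    exact (hφ₂.tendsto_atTop).eventually h3
  obtain ⟨k₀, hk₀⟩ := exists_nat_ge ((4*Δ + 4)/τ + 1)
  obtain ⟨N, hN⟩ := Filter.eventually_atTop.mp (E1.and E2)
  set k := max N k₀ with hkdef
  obtain ⟨hE1, hE2⟩ := hN k (le_max_left _ _)
  set m := γ k with hmdef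
  have hmk : k ≤ m := hγmono.le_apply
  have hmge : ((4*Δ + 4)/τ + 1 : ℝ) ≤ (m : ℝ) := by
    calc ((4*Δ + 4)/τ + 1 : ℝ) ≤ (k₀ : ℝ) := hk₀
      _ ≤ (k : ℝ) := by exact_mod_cast le_max_right N k₀
      _ ≤ (m : ℝ) := by exact_mod_cast hmk
  set dd := discDist a r (wn m) (wn' m) with hdddef
  have hddpos : 0 < dd := hdpos m
  have hddΔ : (m : ℝ) * dd < Δ := lt_of_lt_of_le (hlt' m) (hΔ _ _)
  have hddsmall : dd < τ/4 := by
    by_contra hcontra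
    push_neg at hcontra
    have h1 : Δ + 1 ≤ (4*Δ + 4)/τ * dd := by
      rw [div_mul_eq_mul_div, le_div_iff₀ hτ0]
      nlinarith [mul_nonneg (by linarith : (0:ℝ) ≤ 4*Δ+4) (by linarith : 0 ≤ dd - τ/4)]
    have h2 : ((4*Δ + 4)/τ + 1) * dd ≤ (m:ℝ) * dd :=
      mul_le_mul_of_nonneg_right hmge hddpos.le
    have h3 : ((4*Δ+4)/τ + 1) * dd = (4*Δ+4)/τ*dd + dd := by ring
    linarith
  -- Möbius setup
  set c := (wn m - a) / (r : ℂ) with hcdef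
  set v' := (wn' m - a) / (r : ℂ) with hv'def
  have hc : ‖c‖ < 1 := (mem_ball_iff_abs hr).mp (hwn m)
  have hv' : ‖v'‖ < 1 := (mem_ball_iff_abs hr).mp (hwn' m)
  have hx1lt : ‖c - v'‖ / ‖1 - (starRingEnd ℂ) c * v'‖ < 1 :=
    discDist_lt_one' hr (hwn m) (hwn' m)
  set X := ‖c - v'‖ / ‖1 - (starRingEnd ℂ) c * v'‖ with hXdef
  have hX0 : 0 ≤ X := by positivity
  have hdisc_eq : dd = arctanh X := discDist_eq hr
  have hXle : X ≤ 2 * dd := by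
    rw [hdisc_eq]; exact le_two_mul_arctanh hX0 hx1lt
  have hXτ : X < τ/2 := by linarith
  set ζ' := (v' - c) / (1 - (starRingEnd ℂ) c * v') / (τ : ℂ) with hζ'def
  have habsζ' : ‖ζ'‖ = X / τ := by
    rw [hζ'def, norm_div, norm_div, Complex.norm_real, Real.norm_eq_abs, abs_of_pos hτ0]
    congr 2
    rw [show v' - c = -(c - v') by ring, norm_neg]
  have hζhalf : ‖ζ'‖ ≤ 1/2 := by
    rw [habsζ']
    rw [div_le_iff₀ hτ0]
    linarith
  have hζ'ball : ζ' ∈ ball (0:ℂ) 1 := by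
    rw [mem_ball_zero_iff]
    have : ‖ζ'‖ = ‖ζ'‖ := rfl
    rw [this]; linarith
  have h0ball : (0:ℂ) ∈ ball (0:ℂ) 1 := by simp
  set ψ := mob a r τ c with hψdef
  have hrc : (r : ℂ) ≠ 0 := by exact_mod_cast hr.ne'
  have hψ0 : ψ 0 = wn m := by
    rw [hψdef, mob_zero, hcdef]; field_simp; ring
  have hψζ' : ψ ζ' = wn' m := by
    rw [hψdef, hζ'def, mob_endpoint hτ0 hc hv', hv'def]; field_simp; ring
  have hcomp : MDifferentiableOn 𝓘(ℂ, ℂ) 𝓘(ℂ, E) (fn m ∘ ψ) (ball (0:ℂ) 1) := by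
    refine MDifferentiableOn.comp (hF _ (hfn m))
      ((mob_diff hτ0.le hτhalf hc).mdifferentiableOn) ?_
    intro ζ hζ
    exact hKD (ball_subset_closedBall (mob_mem_ball hr hτ0 hτhalf hc hζ))
  have hψK : ∀ ζ ∈ ball (0:ℂ) 1, ψ ζ ∈ K := fun ζ hζ =>
    ball_subset_closedBall (mob_mem_ball hr hτ0 hτhalf hc hζ)
  have hψnear : ∀ ζ ∈ ball (0:ℂ) 1, dist (ψ ζ) wstar < s := by
    intro ζ hζ
    have h4 : dist (ψ ζ) (wn m) ≤ 2*r*τ := by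
      have h5 := mob_near (a := a) hr hτ0 hτhalf hc hζ
      rw [Complex.dist_eq]
      have e : a + (r:ℂ) * c = wn m := by rw [hcdef]; field_simp; ring
      rw [← e]
      exact h5
    calc dist (ψ ζ) wstar ≤ dist (ψ ζ) (wn m) + dist (wn m) wstar := dist_triangle _ _ _
      _ < 2*r*τ + s/4 := by
          have := hE1
          refine add_lt_add_of_le_of_lt h4 this
      _ ≤ s/4 + s/4 := by linarith
      _ < s := by linarith
  have him : (fn m ∘ ψ) '' ball (0:ℂ) 1 ⊆ U x := by
    rintro _ ⟨ζ, hζ, rfl⟩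
    apply hball
    rw [mem_ball]
    have h6 : dist (g (ψ ζ)) x < ε/2 := hs (hψK ζ hζ) (hψnear ζ hζ)
    have h7 : dist (g (ψ ζ)) (fn m (ψ ζ)) < ε/2 := hE2 _ (hψK ζ hζ)
    calc dist ((fn m ∘ ψ) ζ) x ≤ dist (fn m (ψ ζ)) (g (ψ ζ)) + dist (g (ψ ζ)) x :=
          dist_triangle _ _ _
      _ < ε/2 + ε/2 := add_lt_add_of_lt_of_le (by rw [dist_comm]; exact lt_of_lt_of_le h7 (le_refl _)) h6.le
      _ = ε := by ring
  have hkob := kobayashiDistOn_le_single (E := E) hcomp him h0ball hζ'ball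
  have hpU : fn m (wn m) ∈ U x := him ⟨0, h0ball, by simp [hψ0]⟩
  have hqU : fn m (wn' m) ∈ U x := him ⟨ζ', hζ'ball, by simp [hψζ']⟩
  have hadm := (hU x).2.2.2 (fn m (wn m)) (fn m (wn' m)) hpU hqU
  have hchain : ENNReal.ofReal (dist (fn m (wn m)) (fn m (wn' m)))
      ≤ ENNReal.ofReal (poincareDist 0 ζ') := by
    refine le_trans hadm (le_trans (le_of_eq ?_) hkob)
    simp [Function.comp, hψ0, hψζ']
  have hζ'lt1 : ‖ζ'‖ < 1 := lt_of_le_of_lt hζhalf (by norm_num)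
  have hpoin : poincareDist 0 ζ' = arctanh (‖ζ'‖) := poincareDist_zero ζ'
  have hpnonneg : 0 ≤ poincareDist 0 ζ' := by
    rw [hpoin]; exact arctanh_nonneg (norm_nonneg _) hζ'lt1
  have hdistle : dist (fn m (wn m)) (fn m (wn' m)) ≤ poincareDist 0 ζ' := by
    rwa [ENNReal.ofReal_le_ofReal_iff hpnonneg] at hchain
  have hfinal : dist (fn m (wn m)) (fn m (wn' m)) ≤ 4 * dd / τ := by
    have h8 : arctanh (‖ζ'‖) ≤ 2 * ‖ζ'‖ :=
      arctanh_le_two_mul (norm_nonneg _) hζhalf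
    have h9 : (2 : ℝ) * ‖ζ'‖ = 2 * X / τ := by rw [habsζ']; ring
    have h10 : 2 * X / τ ≤ 4 * dd / τ := by
      rw [div_le_div_iff₀ hτ0 hτ0]
      nlinarith
    rw [hpoin] at hdistle
    linarith
  -- final contradiction
  have hmain : (m : ℝ) * dd < (4 / τ) * dd := by
    have : (4 : ℝ) * dd / τ = (4/τ) * dd := by ring
    rw [← this]
    exact lt_of_lt_of_le (hlt' m) hfinal
  have hmlt : (m : ℝ) < 4 / τ := (mul_lt_mul_iff_left₀ hddpos).mp hmain
  have h11 : (4:ℝ)/τ ≤ (4*Δ + 4)/τ := by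
    gcongr
    linarith
  linarith

lemma equicont {V : Type*} [MetricSpace V] (D : Set ℂ) (hD : IsOpen D)
    (F : Set (ℂ → V))
    (hsup : ∀ a ∈ D, ∀ r : ℝ, 0 < r → closedBall a r ⊆ D → (⨆ f ∈ F, LipConst f a r) < ⊤)
    {x₀ : ℂ} (hx₀ : x₀ ∈ D) :
    ∀ ε > 0, ∃ δ > 0, ∀ w : ℂ, dist w x₀ < δ → ∀ f ∈ F, dist (f x₀) (f w) < ε := by
  intro ε hε
  obtain ⟨r', hr', hball⟩ := Metric.isOpen_iff.mp hD x₀ hx₀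
  set r := r'/2 with hrdef
  have hr : 0 < r := by positivity
  have hsub : closedBall x₀ r ⊆ D := fun z hz =>
    hball (lt_of_le_of_lt (mem_closedBall.mp hz) (by linarith))
  have hC := hsup x₀ hx₀ r hr hsub
  set C := (⨆ f ∈ F, LipConst f x₀ r).toReal with hCdef
  have hC0 : 0 ≤ C := ENNReal.toReal_nonneg
  have key : ∀ f ∈ F, ∀ w ∈ ball x₀ r, w ≠ x₀ →
      dist (f w) (f x₀) ≤ C * discDist x₀ r w x₀ := by
    intro f hf w hw hne
    have hx₀ball : x₀ ∈ ball x₀ r := mem_ball_self hr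
    have hdpos := discDist_pos hr hw hx₀ball hne
    have h1 : ENNReal.ofReal (dist (f w) (f x₀) / discDist x₀ r w x₀) ≤ LipConst f x₀ r := by
      refine le_iSup_of_le w ?_
      refine le_iSup_of_le hw ?_
      refine le_iSup_of_le x₀ ?_
      refine le_iSup_of_le hx₀ball ?_
      exact le_iSup_of_le hne (le_refl _)
    have h2 : LipConst f x₀ r ≤ ⨆ f ∈ F, LipConst f x₀ r :=
      le_iSup₂_of_le f hf (le_refl _)
    have h3 := le_trans h1 h2
    rw [ENNReal.ofReal_le_iff_le_toReal hC.ne] at h3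
    rw [← hCdef] at h3
    exact (div_le_iff₀ hdpos).mp h3
  refine ⟨min (r/2) (ε*r/(4*(C+1))), lt_min (by positivity) (by positivity), ?_⟩
  intro w hw f hf
  rcases eq_or_ne w x₀ with rfl | hne
  · simpa using hε
  have hw1 : dist w x₀ < r/2 := lt_of_lt_of_le hw (min_le_left _ _)
  have hw2 : dist w x₀ < ε*r/(4*(C+1)) := lt_of_lt_of_le hw (min_le_right _ _)
  have hwball : w ∈ ball x₀ r := mem_ball.mpr (by linarith)
  have h4 := key f hf w hwball hne
  have h5 : discDist x₀ r w x₀ = arctanh (‖w - x₀‖ / r) := discDist_center hr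
  have habs : ‖w - x₀‖ = dist w x₀ := (Complex.dist_eq w x₀).symm
  have h6 : ‖w - x₀‖ / r ≤ 1/2 := by
    rw [habs, div_le_iff₀ hr]
    linarith
  have h7 : arctanh (‖w - x₀‖ / r) ≤ 2 * (‖w - x₀‖ / r) :=
    arctanh_le_two_mul (by positivity) h6
  have h8 : dist (f w) (f x₀) ≤ C * (2 * (dist w x₀ / r)) := by
    rw [← habs]
    calc dist (f w) (f x₀) ≤ C * discDist x₀ r w x₀ := h4
      _ ≤ C * (2 * (‖w - x₀‖ / r)) := by
          rw [h5]; exact mul_le_mul_of_nonneg_left h7 hC0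
  have h9 : C * (2 * (dist w x₀ / r)) < ε := by
    rw [lt_div_iff₀ (by positivity : (0:ℝ) < 4*(C+1))] at hw2
    have h10 : dist w x₀ / r < ε / (4*(C+1)) := by
      rw [div_lt_div_iff₀ hr (by positivity)]
      linarith
    have h11 : (0:ℝ) ≤ dist w x₀ / r := by positivity
    calc C * (2 * (dist w x₀ / r)) ≤ (C+1) * (2 * (dist w x₀ / r)) := by nlinarith
      _ < (C+1) * (2 * (ε / (4*(C+1)))) := by
          apply mul_lt_mul_of_pos_left _ (by positivity)
          linarith
      _ = ε / 2 := by field_simp; ring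
      _ < ε := by linarith
  calc dist (f x₀) (f w) = dist (f w) (f x₀) := dist_comm _ _
    _ < ε := lt_of_le_of_lt h8 h9

lemma equicont_family {V : Type*} [MetricSpace V]
    (D : Set ℂ) (hD : IsOpen D) (F : Set (ℂ → V))
    (hsup : ∀ a ∈ D, ∀ r : ℝ, 0 < r → closedBall a r ⊆ D → (⨆ f ∈ F, LipConst f a r) < ⊤)
    {ι : Type*} (H : ι → ↥D → V)
    (hH : ∀ i, ∃ h ∈ F, ∀ z : ↥D, H i z = h z.1) : Equicontinuous H := by
  intro x
  rw [Metric.equicontinuousAt_iff]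
  intro ε hε
  obtain ⟨δ, hδ, hkey⟩ := equicont D hD F hsup x.2 ε hε
  refine ⟨δ, hδ, fun y hy i => ?_⟩
  obtain ⟨h, hhF, hhe⟩ := hH i
  rw [hhe x, hhe y]
  rw [Subtype.dist_eq] at hy
  exact hkey _ hy h hhF

set_option maxHeartbeats 1000000 in

lemma backward_dir {V : Type*} [MetricSpace V] [CompactSpace V] [Nonempty V]
    (D : Set ℂ) (hD : IsOpen D)
    (F : Set (ℂ → V)) (hFc : ∀ f ∈ F, ContinuousOn f D)
    (hsup : ∀ a ∈ D, ∀ r : ℝ, 0 < r → closedBall a r ⊆ D → (⨆ f ∈ F, LipConst f a r) < ⊤) :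
    NormalOn F D := by
  intro f hfF
  classical
  haveI : LocallyCompactSpace ↥D := hD.locallyCompactSpace
  -- the sequence as continuous maps on the subtype
  set G : ℕ → C(↥D, V) := fun n => ⟨fun z => f n z.1, (hFc (f n) (hfF n)).restrict⟩ with hGdef
  -- Arzela-Ascoli: the closure of the family is compact in C(↥D, V)
  have hclemb : Topology.IsClosedEmbedding
      (UniformOnFun.ofFun {K : Set ↥D | IsCompact K} ∘ (DFunLike.coe : C(↥D, V) → ↥D → V)) := by
    refine ⟨ContinuousMap.isUniformEmbedding_toUniformOnFunIsCompact.isEmbedding, ?_⟩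
    have : Set.range (UniformOnFun.ofFun {K : Set ↥D | IsCompact K}
        ∘ (DFunLike.coe : C(↥D, V) → ↥D → V))
        = {φ : ↥D →ᵤ[{K : Set ↥D | IsCompact K}] V |
            Continuous (UniformOnFun.toFun _ φ)} :=
      ContinuousMap.range_toUniformOnFunIsCompact
    rw [this]
    exact UniformOnFun.isClosed_setOf_continuous CompactlyCoherentSpace.isCoherentWith
  have hcpt : IsCompact (closure (Set.range G)) := by
    refine ArzelaAscoli.isCompact_closure_of_isClosedEmbedding (fun K hK => hK) hclemb
      (fun K _ => Equicontinuous.equicontinuousOn ?_ K)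
      (fun K _ x _ => ⟨univ, isCompact_univ, fun i _ => mem_univ _⟩)
    refine equicont_family D hD F hsup _ ?_
    rintro ⟨φ, hφ⟩
    obtain ⟨n, rfl⟩ := hφ
    exact ⟨f n, hfF n, fun z => rfl⟩
  obtain ⟨g₀, -, φ, hφmono, htend⟩ :=
    hcpt.isSeqCompact (fun n => subset_closure (mem_range_self n))
  have hconv := ContinuousMap.tendsto_iff_forall_isCompact_tendstoUniformlyOn.mp htend
  refine ⟨φ, hφmono, fun z => if h : z ∈ D then g₀ ⟨z, h⟩ else Classical.arbitrary V, ?_⟩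
  intro K hKD hK
  have hK' : IsCompact ((Subtype.val : ↥D → ℂ) ⁻¹' K) := by
    refine Topology.IsInducing.isCompact_preimage' Topology.IsInducing.subtypeVal hK ?_
    rw [Subtype.range_coe]
    exact hKD
  have h2 := hconv _ hK'
  rw [Metric.tendstoUniformlyOn_iff] at h2 ⊢
  intro ε hε
  filter_upwards [h2 ε hε] with n hn
  intro z hz
  have hzD : z ∈ D := hKD hz
  have h3 := hn ⟨z, hzD⟩ hz
  have h4 : dist (g₀ ⟨z, hzD⟩) (f (φ n) z) < ε := h3
  simpa [dif_pos hzD] using h4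

theorem statement_6 {E : Type*} [NormedAddCommGroup E] [NormedSpace ℂ E]
    [FiniteDimensional ℂ E]
    (D : Set ℂ) (hD : IsOpen D) (hDconn : IsConnected D)
    (V : Type*) [MetricSpace V] [ChartedSpace E V] [IsManifold 𝓘(ℂ, E) (⊤ : WithTop ℕ∞) V]
    [CompactSpace V] [ConnectedSpace V] (hδ : IsAdmissible E V)
    (F : Set (ℂ → V)) (hF : ∀ f ∈ F, MDifferentiableOn 𝓘(ℂ, ℂ) 𝓘(ℂ, E) f D) :
    NormalOn F D ↔ ∀ a ∈ D, ∀ r : ℝ, 0 < r → closedBall a r ⊆ D →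
      (⨆ f ∈ F, LipConst f a r) < ⊤ := by
  constructor
  · intro hnorm
    exact forward_dir D hD V hδ F hF hnorm
  · intro hsup
    exact backward_dir D hD F (fun f hf => (hF f hf).continuousOn) hsup

end
end

section
/- Let 0 < r' < r, let b ∈ ℂ∖{0}, and let f be a holomorphic function on an open subset of ℂ containing the closed annulus {z ∈ ℂ : r' ≤ |z| ≤ r}. Suppose that f({z : |z| = r}) ⊆ 𝔻(0, |b|/3) and f({z : |z| = r'}) ⊆ 𝔻(b, |b|/3). Then for every y with r' < |y| < r, one has f(y) ∈ {w : |w| ≤ |b|/3} ∪ {w : |w − b| ≤ |b|/3}. -/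
open Filter Metric Set Topology
open scoped Manifold ENNReal

noncomputable section

/-- Existence of a direction `d` making a nonpositive angle with both `v0` and `v1`. -/
lemma aux_dir (v0 v1 : ℂ) (h0 : v0 ≠ 0) (h1 : v1 ≠ 0) :
    ∃ d : ℂ, d ≠ 0 ∧ ((starRingEnd ℂ) d * v0).re ≤ 0 ∧ ((starRingEnd ℂ) d * v1).re ≤ 0 := by
  have ha0 : (0:ℝ) < ‖v0‖ := norm_pos_iff.mpr h0
  have ha1 : (0:ℝ) < ‖v1‖ := norm_pos_iff.mpr h1
  by_cases hdeg : v0 * (‖v1‖ : ℂ) + v1 * (‖v0‖ : ℂ) = 0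
  · -- antiparallel case : take `d = I * v0`
    have hx : v0.re * ‖v1‖ + v1.re * ‖v0‖ = 0 := by
      have := congrArg Complex.re hdeg
      simpa [Complex.add_re, Complex.mul_re] using this
    have hy : v0.im * ‖v1‖ + v1.im * ‖v0‖ = 0 := by
      have := congrArg Complex.im hdeg
      simpa [Complex.add_im, Complex.mul_im] using this
    refine ⟨Complex.I * v0, mul_ne_zero Complex.I_ne_zero h0, le_of_eq ?_, le_of_eq ?_⟩
    · simp [Complex.mul_re, Complex.mul_im]
      ring
    · have hre : ((starRingEnd ℂ) (Complex.I * v0) * v1).re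
          = -(v0.im * v1.re) + v0.re * v1.im := by
        simp [Complex.mul_re, Complex.mul_im]
        ring
      rw [hre]
      have hmul : (-(v0.im * v1.re) + v0.re * v1.im) * ‖v0‖ = 0 := by
        linear_combination v0.re * hy - v0.im * hx
      exact (mul_eq_zero.mp hmul).resolve_right ha0.ne'
  · refine ⟨-(v0 * (‖v1‖ : ℂ) + v1 * (‖v0‖ : ℂ)), neg_ne_zero.mpr hdeg,
      ?_, ?_⟩
    · have hre : ((starRingEnd ℂ) (-(v0 * (‖v1‖ : ℂ) + v1 * (‖v0‖ : ℂ))) * v0).re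
          = -(‖v1‖ * (v0.re ^ 2 + v0.im ^ 2)
              + ‖v0‖ * (v1.re * v0.re + v1.im * v0.im)) := by
        simp [Complex.mul_re, Complex.mul_im, Complex.add_re, Complex.add_im]
        ring
      rw [hre]
      have hcross : -(‖v1‖ * ‖v0‖)
          ≤ v1.re * v0.re + v1.im * v0.im := by
        have h := Complex.abs_re_le_norm ((starRingEnd ℂ) v1 * v0)
        have habs : ‖(starRingEnd ℂ) v1 * v0‖
            = ‖v1‖ * ‖v0‖ := by
          rw [norm_mul, Complex.norm_conj]
        rw [habs] at h
        have h' := (abs_le.mp h).1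
        have hre2 : ((starRingEnd ℂ) v1 * v0).re = v1.re * v0.re + v1.im * v0.im := by
          simp [Complex.mul_re]
        linarith [hre2 ▸ h']
      have hsq : v0.re ^ 2 + v0.im ^ 2 = ‖v0‖ ^ 2 := by
        rw [Complex.sq_norm, Complex.normSq_apply]; ring
      nlinarith [mul_le_mul_of_nonneg_left hcross ha0.le]
    · have hre : ((starRingEnd ℂ) (-(v0 * (‖v1‖ : ℂ) + v1 * (‖v0‖ : ℂ))) * v1).re
          = -(‖v0‖ * (v1.re ^ 2 + v1.im ^ 2)
              + ‖v1‖ * (v0.re * v1.re + v0.im * v1.im)) := by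
        simp [Complex.mul_re, Complex.mul_im, Complex.add_re, Complex.add_im]
        ring
      rw [hre]
      have hcross : -(‖v0‖ * ‖v1‖)
          ≤ v0.re * v1.re + v0.im * v1.im := by
        have h := Complex.abs_re_le_norm ((starRingEnd ℂ) v0 * v1)
        have habs : ‖(starRingEnd ℂ) v0 * v1‖
            = ‖v0‖ * ‖v1‖ := by
          rw [norm_mul, Complex.norm_conj]
        rw [habs] at h
        have h' := (abs_le.mp h).1
        have hre2 : ((starRingEnd ℂ) v0 * v1).re = v0.re * v1.re + v0.im * v1.im := by
          simp [Complex.mul_re]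
        linarith [hre2 ▸ h']
      have hsq : v1.re ^ 2 + v1.im ^ 2 = ‖v1‖ ^ 2 := by
        rw [Complex.sq_norm, Complex.normSq_apply]; ring
      nlinarith [mul_le_mul_of_nonneg_left hcross ha1.le]

/-- Moving along a ray in a direction making nonpositive angle with `c - u` does not
decrease the distance to `c`. -/
lemma aux_ray (u c d : ℂ) (t : ℝ) (ht : 0 ≤ t)
    (h : ((starRingEnd ℂ) d * (c - u)).re ≤ 0) :
    ‖u - c‖ ≤ ‖u + t * d - c‖ := by
  rw [Complex.norm_def, Complex.norm_def]
  apply Real.sqrt_le_sqrt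
  have e : u + (t : ℂ) * d - c = (u - c) + (t : ℂ) * d := by ring
  rw [e, Complex.normSq_add]
  have h1 : 0 ≤ Complex.normSq ((t : ℂ) * d) := Complex.normSq_nonneg _
  have h2 : 0 ≤ ((u - c) * (starRingEnd ℂ) ((t : ℂ) * d)).re := by
    have e2 : ((u - c) * (starRingEnd ℂ) ((t : ℂ) * d)).re
        = t * (-(((starRingEnd ℂ) d * (c - u)).re)) := by
      simp [Complex.mul_re, Complex.mul_im, Complex.sub_re, Complex.sub_im]
      ring
    rw [e2]
    exact mul_nonneg ht (by linarith)
  linarith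

theorem statement_13 (r' r : ℝ) (h0 : 0 < r') (hrr : r' < r) (b : ℂ) (hb : b ≠ 0)
    (U : Set ℂ) (hU : IsOpen U)
    (hUsub : {ζ : ℂ | r' ≤ ‖ζ‖ ∧ ‖ζ‖ ≤ r} ⊆ U)
    (f : ℂ → ℂ) (hf : DifferentiableOn ℂ f U)
    (houter : ∀ ζ : ℂ, ‖ζ‖ = r → f ζ ∈ ball (0 : ℂ) (‖b‖ / 3))
    (hinner : ∀ ζ : ℂ, ‖ζ‖ = r' → f ζ ∈ ball b (‖b‖ / 3))
    (y : ℂ) (hy1 : r' < ‖y‖) (hy2 : ‖y‖ < r) :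
    f y ∈ closedBall (0 : ℂ) (‖b‖ / 3) ∪ closedBall b (‖b‖ / 3) := by
  by_contra hcon
  set ρ : ℝ := ‖b‖ / 3 with hρdef
  have hbabs : 0 < ‖b‖ := norm_pos_iff.mpr hb
  have hρ : 0 < ρ := by rw [hρdef]; linarith
  have hcon0 : f y ∉ closedBall (0:ℂ) ρ := fun h => hcon (Or.inl h)
  have hcon1 : f y ∉ closedBall b ρ := fun h => hcon (Or.inr h)
  have hu0 : ρ < ‖f y‖ := by
    rw [mem_closedBall, Complex.dist_eq, sub_zero, not_le] at hcon0; exact hcon0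
  have hu1 : ρ < ‖f y - b‖ := by
    rw [mem_closedBall, Complex.dist_eq, not_le] at hcon1; exact hcon1
  set G : Set ℂ := (closedBall (0:ℂ) ρ ∪ closedBall b ρ)ᶜ with hGdef
  have hGopen : IsOpen G := (Metric.isClosed_closedBall.union Metric.isClosed_closedBall).isOpen_compl
  have hGmem : ∀ w : ℂ, w ∈ G ↔ ρ < ‖w‖ ∧ ρ < ‖w - b‖ := by
    intro w
    simp [hGdef, mem_closedBall, Complex.dist_eq, not_or, not_le, sub_zero]
  set W : Set ℂ := ({z : ℂ | r' < ‖z‖} ∩ {z : ℂ | ‖z‖ < r})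
      ∩ (U ∩ f ⁻¹' G) with hWdef
  have hWopen : IsOpen W :=
    ((isOpen_lt continuous_const continuous_norm).inter
      (isOpen_lt continuous_norm continuous_const)).inter
      (hf.continuousOn.isOpen_inter_preimage hU hGopen)
  have hyU : y ∈ U := hUsub ⟨hy1.le, hy2.le⟩
  have hyW : y ∈ W := ⟨⟨hy1, hy2⟩, hyU, (hGmem _).mpr ⟨hu0, hu1⟩⟩
  have hWU : W ⊆ U := fun z hz => hz.2.1
  -- a closed superset of `W`
  set A : Set ℂ := {ζ : ℂ | r' ≤ ‖ζ‖ ∧ ‖ζ‖ ≤ r} with hAdef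
  have hAclosed : IsClosed A := by
    have : A = (fun ζ : ℂ => ‖ζ‖) ⁻¹' (Set.Icc r' r) := rfl
    rw [this]; exact isClosed_Icc.preimage continuous_norm
  set C : Set ℂ := {w : ℂ | ρ ≤ ‖w‖} ∩ {w : ℂ | ρ ≤ ‖w - b‖} with hCdef
  have hCclosed : IsClosed C :=
    (isClosed_le continuous_const continuous_norm).inter
      (isClosed_le continuous_const (continuous_norm.comp (continuous_id.sub continuous_const)))
  set S : Set ℂ := A ∩ f ⁻¹' C with hSdef
  have hSclosed : IsClosed S :=
    (hf.continuousOn.mono hUsub).preimage_isClosed_of_isClosed hAclosed hCclosed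
  have hWS : W ⊆ S := by
    rintro z ⟨⟨hz1, hz2⟩, hzU, hzG⟩
    obtain ⟨hg1, hg2⟩ := (hGmem _).mp hzG
    exact ⟨⟨hz1.le, hz2.le⟩, hg1.le, hg2.le⟩
  set Ω : Set ℂ := connectedComponentIn W y with hΩdef
  have hΩopen : IsOpen Ω := hWopen.connectedComponentIn
  have hΩW : Ω ⊆ W := connectedComponentIn_subset _ _
  have hyΩ : y ∈ Ω := mem_connectedComponentIn hyW
  have hclS : closure Ω ⊆ S := closure_minimal (hΩW.trans hWS) hSclosed
  have hclU : closure Ω ⊆ U := fun z hz => hUsub (hclS hz).1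
  have hkey : closure Ω ∩ W ⊆ Ω := by
    rintro z ⟨hz1, hz2⟩
    have hC : IsOpen (connectedComponentIn W z) := hWopen.connectedComponentIn
    have hzC : z ∈ connectedComponentIn W z := mem_connectedComponentIn hz2
    obtain ⟨w, hw1, hw2⟩ := mem_closure_iff_nhds.mp hz1 _ (hC.mem_nhds hzC)
    have hun : IsPreconnected (connectedComponentIn W z ∪ Ω) :=
      IsPreconnected.union w hw1 hw2 isPreconnected_connectedComponentIn
        isPreconnected_connectedComponentIn
    have hsub : connectedComponentIn W z ∪ Ω ⊆ Ω :=
      hun.subset_connectedComponentIn (Or.inr hyΩ)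
        (union_subset (connectedComponentIn_subset _ _) hΩW)
    exact hsub (Or.inl hzC)
  have hfrontier : ∀ z ∈ frontier Ω, f z ∈ closedBall (0:ℂ) ρ ∪ closedBall b ρ := by
    intro z hz
    have hzcl : z ∈ closure Ω := hz.1
    have hzS : z ∈ S := hclS hzcl
    have hznΩ : z ∉ Ω := fun h => hz.2 (by rwa [hΩopen.interior_eq])
    have hznW : z ∉ W := fun h => hznΩ (hkey ⟨hzcl, h⟩)
    obtain ⟨⟨hzr', hzr⟩, hzC⟩ := hzS
    by_cases h1 : ‖z‖ = r'
    · have := hinner z h1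
      rw [mem_ball, Complex.dist_eq] at this
      exact absurd this (not_lt.mpr hzC.2)
    by_cases h2 : ‖z‖ = r
    · have := houter z h2
      rw [mem_ball, Complex.dist_eq, sub_zero] at this
      exact absurd this (not_lt.mpr hzC.1)
    have hzU : z ∈ U := hUsub ⟨hzr', hzr⟩
    have hnG : f z ∉ G := fun hg =>
      hznW ⟨⟨lt_of_le_of_ne hzr' (Ne.symm h1), lt_of_le_of_ne hzr h2⟩, hzU, hg⟩
    rcases not_and_or.mp (fun hg => hnG ((hGmem _).mpr hg)) with h | h
    · exact Or.inl (by rw [mem_closedBall, Complex.dist_eq, sub_zero]; exact not_lt.mp h)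
    · exact Or.inr (by rw [mem_closedBall, Complex.dist_eq]; exact not_lt.mp h)
  have hclbd : closure Ω ⊆ closedBall (0:ℂ) r := by
    intro z hz
    rw [mem_closedBall, Complex.dist_eq, sub_zero]
    exact (hclS hz).1.2
  have hclcompact : IsCompact (closure Ω) :=
    Metric.isCompact_of_isClosed_isBounded isClosed_closure
      ((Metric.isBounded_closedBall).subset hclbd)
  have hfcont : ContinuousOn f (closure Ω) := hf.continuousOn.mono hclU
  set K : Set ℂ := f '' closure Ω with hKdef
  have hKcompact : IsCompact K := hclcompact.image_of_continuousOn hfcont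
  have huK : f y ∈ K := ⟨y, subset_closure hyΩ, rfl⟩
  have hΩU : Ω ⊆ U := hΩW.trans hWU
  have han : AnalyticOnNhd ℂ f Ω := (hf.analyticOnNhd hU).mono hΩU
  rcases han.is_constant_or_isOpen isPreconnected_connectedComponentIn with hconst | hopen
  · -- constant case
    obtain ⟨w, hw⟩ := hconst
    have hwy : w = f y := (hw y hyΩ).symm
    have hne : (frontier Ω).Nonempty := by
      rw [nonempty_iff_ne_empty]
      intro hfr
      have hclopen : IsClopen Ω := isClopen_iff_frontier_eq_empty.mpr hfr
      have huniv : Ω = univ := hclopen.eq_univ ⟨y, hyΩ⟩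
      have hmem : ((r + 1 : ℝ) : ℂ) ∈ W := hΩW (huniv ▸ mem_univ _)
      have habs : ‖((r + 1 : ℝ) : ℂ)‖ = r + 1 := by
        rw [Complex.norm_real, Real.norm_eq_abs]; exact abs_of_pos (by linarith)
      have h2 := hmem.1.2
      simp only [Set.mem_setOf_eq, habs] at h2
      linarith
    obtain ⟨z, hz⟩ := hne
    have hzfr := hfrontier z hz
    have hzU : z ∈ U := hclU hz.1
    have hca : ContinuousAt f z := (hf.differentiableAt (hU.mem_nhds hzU)).continuousAt
    haveI hnb : (𝓝[Ω] z).NeBot := mem_closure_iff_nhdsWithin_neBot.mp hz.1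
    have hfz : f z = f y := by
      have h1 : Filter.Tendsto f (𝓝[Ω] z) (𝓝 (f z)) :=
        hca.tendsto.mono_left nhdsWithin_le_nhds
      have h2 : Filter.Tendsto f (𝓝[Ω] z) (𝓝 (f y)) := by
        apply Filter.Tendsto.congr' _ tendsto_const_nhds
        filter_upwards [self_mem_nhdsWithin] with x hx
        rw [hw x hx, hwy]
      exact tendsto_nhds_unique h1 h2
    rw [hfz] at hzfr
    exact hcon hzfr
  · -- open mapping case
    have hΩimg : IsOpen (f '' Ω) := hopen Ω Subset.rfl hΩopen
    have hKclosed : IsClosed K := hKcompact.isClosed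
    have hfrK : frontier K ⊆ closedBall (0:ℂ) ρ ∪ closedBall b ρ := by
      intro w hw
      have hwK : w ∈ K := by
        have := hw.1; rwa [hKclosed.closure_eq] at this
      obtain ⟨z, hzcl, rfl⟩ := hwK
      by_cases hzΩ : z ∈ Ω
      · exact absurd (interior_maximal (Set.image_mono (f := f) subset_closure) hΩimg ⟨z, hzΩ, rfl⟩) hw.2
      · exact hfrontier z ⟨hzcl, fun h => hzΩ (by rwa [hΩopen.interior_eq] at h)⟩
    -- a ray from `f y` avoiding both closed balls
    have hfy0 : (0 : ℂ) - f y ≠ 0 := by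
      intro h
      have : f y = 0 := by linear_combination -h
      rw [this] at hu0; simp at hu0; linarith
    have hfyb : b - f y ≠ 0 := by
      intro h
      have : f y - b = 0 := by linear_combination -h
      rw [this] at hu1; simp at hu1; linarith
    obtain ⟨d, hd0, hdv0, hdv1⟩ := aux_dir ((0:ℂ) - f y) (b - f y) hfy0 hfyb
    have hray : ∀ t : ℝ, 0 ≤ t → (f y + (t:ℂ) * d) ∉ closedBall (0:ℂ) ρ ∪ closedBall b ρ := by
      intro t ht hmem
      rcases hmem with h | h
      · have h1 := aux_ray (f y) 0 d t ht hdv0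
        rw [mem_closedBall, Complex.dist_eq] at h
        simp only [sub_zero] at h h1
        linarith
      · have h1 := aux_ray (f y) b d t ht hdv1
        rw [mem_closedBall, Complex.dist_eq] at h
        linarith
    set g : ℝ → ℂ := fun t => f y + (t:ℂ) * d with hgdef
    have hgcont : Continuous g :=
      continuous_const.add (Complex.continuous_ofReal.mul continuous_const)
    set T : Set ℝ := Set.Ici (0:ℝ) ∩ g ⁻¹' K with hTdef
    have hT0 : (0:ℝ) ∈ T := by
      refine ⟨Set.mem_Ici.mpr (le_refl 0), ?_⟩
      have : g 0 = f y := by simp [hgdef]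
      simp only [mem_preimage, this]
      exact huK
    have hTclosed : IsClosed T := isClosed_Ici.inter (hKclosed.preimage hgcont)
    obtain ⟨M, hM⟩ := hKcompact.isBounded.subset_closedBall 0
    have hdpos : 0 < ‖d‖ := norm_pos_iff.mpr hd0
    have hTbdd : BddAbove T := by
      refine ⟨(M + ‖f y‖) / ‖d‖, ?_⟩
      rintro t ⟨ht0, htK⟩
      rw [le_div_iff₀ hdpos]
      have h1 : ‖g t‖ ≤ M := by
        have := hM htK
        rwa [mem_closedBall, Complex.dist_eq, sub_zero] at this
      have h2 : ‖(t:ℂ) * d‖ ≤ ‖g t‖ + ‖f y‖ := by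
        have e : (t:ℂ) * d = g t - f y := by rw [hgdef]; ring
        rw [e]
        exact norm_sub_le _ _
      have h3 : ‖(t:ℂ) * d‖ = t * ‖d‖ := by
        rw [norm_mul, Complex.norm_real, Real.norm_eq_abs, abs_of_nonneg ht0]
      linarith
    set t0 := sSup T with ht0def
    have ht0T : t0 ∈ T := hTclosed.csSup_mem ⟨0, hT0⟩ hTbdd
    have hfrne : g t0 ∉ frontier K := fun h => hray t0 ht0T.1 (hfrK h)
    have hint : g t0 ∈ interior K := by
      by_contra hni
      exact hfrne (by rw [hKclosed.frontier_eq]; exact ⟨ht0T.2, hni⟩)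
    obtain ⟨ε, hε, hball⟩ :=
      Metric.isOpen_iff.mp (isOpen_interior.preimage hgcont) t0 hint
    have hmem : t0 + ε/2 ∈ T := by
      constructor
      · have h5 := Set.mem_Ici.mp ht0T.1
        simp only [Set.mem_Ici]
        linarith
      · have hb2 : t0 + ε/2 ∈ ball t0 ε := by
          rw [mem_ball, Real.dist_eq, show t0 + ε/2 - t0 = ε/2 by ring,
            abs_of_pos (by linarith)]
          linarith
        exact Set.mem_preimage.mpr (interior_subset (Set.mem_preimage.mp (hball hb2)))
    have := le_csSup hTbdd hmem
    linarith

end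
end

section
/- Let V be a compact connected complex manifold equipped with an admissible metric δ, let a ∈ ℂ and r > 0, and let f be a holomorphic map from an open subset of ℂ containing the closure of 𝔻(a,r) to V. Then L_{f,𝔻(a,r)} < ∞. Moreover, if φ : 𝔻(b,s) → 𝔻(a,r) is a biholomorphism (a holomorphic bijection with holomorphic inverse) between discs, then L_{f∘φ,𝔻(b,s)} = L_{f,𝔻(a,r)}. -/
open Filter Metric Set Topology
open scoped Manifold ENNReal

noncomputable section

namespace Aux14

lemma arctanh_nonneg {x : ℝ} (h0 : 0 ≤ x) (h1 : x < 1) : 0 ≤ arctanh x := by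
  have : (1:ℝ) ≤ (1 + x) / (1 - x) := (one_le_div (by linarith)).2 (by linarith)
  have := Real.log_nonneg this
  unfold arctanh; linarith

lemma arctanh_pos {x : ℝ} (h0 : 0 < x) (h1 : x < 1) : 0 < arctanh x := by
  have : (1:ℝ) < (1 + x) / (1 - x) := (one_lt_div (by linarith)).2 (by linarith)
  have := Real.log_pos this
  unfold arctanh; linarith

lemma arctanh_le_arctanh {x y : ℝ} (h0 : 0 ≤ x) (hxy : x ≤ y) (h1 : y < 1) :
    arctanh x ≤ arctanh y := by
  have hx1 : x < 1 := lt_of_le_of_lt hxy h1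
  have hA : (0:ℝ) < (1 + x) / (1 - x) := div_pos (by linarith) (by linarith)
  have hle : (1 + x) / (1 - x) ≤ (1 + y) / (1 - y) := by
    rw [div_le_div_iff₀ (by linarith) (by linarith)]; nlinarith
  have := Real.log_le_log hA hle
  unfold arctanh; linarith

lemma arctanh_le_two_mul {x : ℝ} (h0 : 0 ≤ x) (h1 : x ≤ 1/2) : arctanh x ≤ 2 * x := by
  have h2 : (0:ℝ) < 1 - x := by linarith
  have hlog := Real.log_le_sub_one_of_pos (show (0:ℝ) < (1 + x) / (1 - x) by positivity)
  have he : (1 + x) / (1 - x) - 1 = 2 * x / (1 - x) := by field_simp; ring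
  have hb : 2 * x / (1 - x) ≤ 4 * x := by rw [div_le_iff₀ h2]; nlinarith
  unfold arctanh; rw [he] at hlog; linarith

lemma half_le_arctanh {x : ℝ} (h0 : 0 ≤ x) (h1 : x < 1) : x / 2 ≤ arctanh x := by
  have h2 : (0:ℝ) < 1 + x := by linarith
  have h3 : (0:ℝ) < 1 - x := by linarith
  have hlog := Real.log_le_sub_one_of_pos (show (0:ℝ) < (1 - x) / (1 + x) by positivity)
  have hkey : Real.log ((1 + x) / (1 - x)) = - Real.log ((1 - x) / (1 + x)) := by
    rw [← Real.log_inv]; congr 1; rw [inv_div]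
  have hb : (1 - x) / (1 + x) - 1 ≤ -x := by
    rw [div_sub_one (by positivity), div_le_iff₀ h2]; nlinarith
  unfold arctanh; rw [hkey]; nlinarith

/-- The Möbius map of the unit disc sending `c` to `0`. -/
def mob (c z : ℂ) : ℂ := (z - c) / (1 - (starRingEnd ℂ) c * z)

lemma normSq_identity (u v : ℂ) :
    Complex.normSq (1 - (starRingEnd ℂ) u * v) - Complex.normSq (u - v)
      = (1 - Complex.normSq u) * (1 - Complex.normSq v) := by
  have h : ((Complex.normSq (1 - (starRingEnd ℂ) u * v) - Complex.normSq (u - v) : ℝ) : ℂ)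
      = ((1 - Complex.normSq u) * (1 - Complex.normSq v) : ℝ) := by
    push_cast
    rw [← Complex.mul_conj, ← Complex.mul_conj, ← Complex.mul_conj, ← Complex.mul_conj]
    simp only [map_sub, map_mul, map_one, Complex.conj_conj]
    ring
  exact_mod_cast h

lemma normSq_lt_one {u : ℂ} (hu : ‖u‖ < 1) : Complex.normSq u < 1 := by
  rw [← Complex.sq_norm]; nlinarith [norm_nonneg u]

lemma abs_sub_lt_denom {u v : ℂ} (hu : ‖u‖ < 1) (hv : ‖v‖ < 1) :
    ‖u - v‖ < ‖1 - (starRingEnd ℂ) u * v‖ := by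
  have h1 := normSq_lt_one hu
  have h2 := normSq_lt_one hv
  have h3 := normSq_identity u v
  have h4 : Complex.normSq (u - v) < Complex.normSq (1 - (starRingEnd ℂ) u * v) := by nlinarith
  rw [Complex.norm_def, Complex.norm_def]
  exact Real.sqrt_lt_sqrt (Complex.normSq_nonneg _) h4

lemma denom_pos {u v : ℂ} (hu : ‖u‖ < 1) (hv : ‖v‖ < 1) :
    0 < ‖1 - (starRingEnd ℂ) u * v‖ :=
  lt_of_le_of_lt (norm_nonneg _) (abs_sub_lt_denom hu hv)

lemma abs_mob_lt_one {u v : ℂ} (hu : ‖u‖ < 1) (hv : ‖v‖ < 1) :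
    ‖mob u v‖ < 1 := by
  rw [mob, norm_div, div_lt_one (denom_pos hu hv), norm_sub_rev]
  exact abs_sub_lt_denom hu hv

lemma mob_mapsTo {c : ℂ} (hc : ‖c‖ < 1) :
    MapsTo (mob c) (ball (0:ℂ) 1) (ball (0:ℂ) 1) := by
  intro z hz
  rw [mem_ball_zero_iff] at hz ⊢
  exact abs_mob_lt_one hc hz

lemma denom_ne_zero {c z : ℂ} (hc : ‖c‖ < 1) (hz : ‖z‖ < 1) :
    (1 : ℂ) - (starRingEnd ℂ) c * z ≠ 0 := by
  intro h
  have := denom_pos hc hz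
  rw [h] at this; simp at this

lemma mob_diffOn {c : ℂ} (hc : ‖c‖ < 1) :
    DifferentiableOn ℂ (mob c) (ball (0:ℂ) 1) := by
  apply DifferentiableOn.div
  · exact (differentiable_id.sub_const c).differentiableOn
  · exact ((differentiable_const _).sub ((differentiable_const _).mul differentiable_id)).differentiableOn
  · intro z hz
    rw [mem_ball_zero_iff] at hz
    exact denom_ne_zero hc hz

lemma one_sub_conj_mul_self_ne {c : ℂ} (hc : ‖c‖ < 1) :
    (1 : ℂ) - (starRingEnd ℂ) c * c ≠ 0 := by
  have h : (starRingEnd ℂ) c * c = (Complex.normSq c : ℂ) := by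
    rw [mul_comm, Complex.mul_conj]
  rw [h]
  have := normSq_lt_one hc
  intro he
  have : (Complex.normSq c : ℂ) = 1 := by linear_combination -he
  have : Complex.normSq c = 1 := by exact_mod_cast this
  linarith

lemma mob_inv {c z : ℂ} (hc : ‖c‖ < 1) (hz : ‖z‖ < 1) :
    mob (-c) (mob c z) = z := by
  have hd : (1 : ℂ) - (starRingEnd ℂ) c * z ≠ 0 := denom_ne_zero hc hz
  have hn : (1 : ℂ) - (starRingEnd ℂ) c * c ≠ 0 := one_sub_conj_mul_self_ne hc
  rw [mob, mob, map_neg]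
  rw [div_eq_iff]
  · have hd' : (1 : ℂ) - z * (starRingEnd ℂ) c ≠ 0 := by rwa [mul_comm z]
    field_simp
    ring
  · have key : 1 - -(starRingEnd ℂ) c * ((z - c) / (1 - (starRingEnd ℂ) c * z))
        = (1 - (starRingEnd ℂ) c * c) / (1 - (starRingEnd ℂ) c * z) := by
      field_simp
      ring
    rw [key]
    exact div_ne_zero hn hd

lemma mob_self (c : ℂ) : mob c c = 0 := by simp [mob]

lemma mob_neg_zero (c : ℂ) : mob (-c) 0 = c := by simp [mob]

/-- The Schwarz–Pick lemma on the unit disc. -/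
lemma schwarzPick {g : ℂ → ℂ} (hg : DifferentiableOn ℂ g (ball (0:ℂ) 1))
    (hm : MapsTo g (ball (0:ℂ) 1) (ball (0:ℂ) 1)) {u v : ℂ}
    (hu : u ∈ ball (0:ℂ) 1) (hv : v ∈ ball (0:ℂ) 1) :
    ‖mob (g u) (g v)‖ ≤ ‖mob u v‖ := by
  rw [mem_ball_zero_iff] at hu hv
  have hgu : ‖g u‖ < 1 := by
    have := hm (by rw [mem_ball_zero_iff]; exact hu)
    rwa [mem_ball_zero_iff] at this
  have hmu : ‖-u‖ < 1 := by rwa [norm_neg]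
  set h : ℂ → ℂ := mob (g u) ∘ g ∘ mob (-u) with hh
  have hdiff : DifferentiableOn ℂ h (ball (0:ℂ) 1) :=
    ((mob_diffOn hgu).comp (hg.comp (mob_diffOn hmu) (mob_mapsTo hmu))
      (hm.comp (mob_mapsTo hmu)))
  have hmaps : MapsTo h (ball (0:ℂ) 1) (ball (0:ℂ) 1) :=
    (mob_mapsTo hgu).comp (hm.comp (mob_mapsTo hmu))
  have h0 : h 0 = 0 := by
    simp only [hh, Function.comp_apply, mob_neg_zero, mob_self]
  have hz : ‖mob u v‖ < 1 := abs_mob_lt_one hu hv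
  have := Complex.norm_le_norm_of_mapsTo_ball hdiff (hmaps.mono_right ball_subset_closedBall) h0 hz
  have heval : h (mob u v) = mob (g u) (g v) := by
    simp only [hh, Function.comp_apply, mob_inv hu hv]
  rwa [heval] at this

lemma poincareDist_eq_mob (x y : ℂ) :
    poincareDist x y = arctanh (‖mob x y‖) := by
  unfold poincareDist mob
  rw [norm_div, norm_div, norm_sub_rev]

lemma mem_unit {a z : ℂ} {r : ℝ} (hr : 0 < r) (h : z ∈ ball a r) :
    ‖(z - a) / (r:ℂ)‖ < 1 := by
  rw [norm_div, Complex.norm_real, Real.norm_eq_abs, abs_of_pos hr, div_lt_one hr]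
  rwa [mem_ball, Complex.dist_eq] at h

lemma discDist_eq {a : ℂ} {r : ℝ} (hr : 0 < r) (z w : ℂ) :
    discDist a r z w = arctanh (‖mob ((z - a)/(r:ℂ)) ((w - a)/(r:ℂ))‖) := by
  unfold discDist mob
  congr 1
  have h1 : (w - a)/(r:ℂ) - (z - a)/(r:ℂ) = (w - z)/(r:ℂ) := by ring
  have h2 : 1 - (starRingEnd ℂ) ((z - a)/(r:ℂ)) * ((w - a)/(r:ℂ))
      = ((r:ℂ)^2 - (starRingEnd ℂ) (z - a) * (w - a)) / (r:ℂ)^2 := by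
    rw [map_div₀, Complex.conj_ofReal]
    have hrc : (r:ℂ) ≠ 0 := by exact_mod_cast hr.ne'
    field_simp
  rw [h1, h2, norm_div, norm_div, norm_div, norm_pow, Complex.norm_real, Real.norm_eq_abs, abs_of_pos hr]
  have hzw : ‖w - z‖ = ‖z - w‖ := norm_sub_rev w z
  set m := ‖(r:ℂ)^2 - (starRingEnd ℂ) (z - a) * (w - a)‖ with hm
  rcases eq_or_ne m 0 with h | h
  · simp [h, hzw]
  · rw [hzw]
    field_simp

lemma discDist_nonneg {a : ℂ} {r : ℝ} (hr : 0 < r) {z w : ℂ}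
    (hz : z ∈ ball a r) (hw : w ∈ ball a r) : 0 ≤ discDist a r z w := by
  rw [discDist_eq hr]
  exact arctanh_nonneg (norm_nonneg _)
    (abs_mob_lt_one (mem_unit hr hz) (mem_unit hr hw))

lemma discDist_pos {a : ℂ} {r : ℝ} (hr : 0 < r) {z w : ℂ}
    (hz : z ∈ ball a r) (hw : w ∈ ball a r) (hne : z ≠ w) : 0 < discDist a r z w := by
  rw [discDist_eq hr]
  have hu := mem_unit hr hz
  have hv := mem_unit hr hw
  refine arctanh_pos ?_ (abs_mob_lt_one hu hv)
  rw [mob, norm_div]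
  apply div_pos
  · rw [norm_pos_iff]
    have he : (w - a)/(r:ℂ) - (z - a)/(r:ℂ) = (w - z)/(r:ℂ) := by ring
    rw [he]
    apply div_ne_zero
    · exact sub_ne_zero.mpr (Ne.symm hne)
    · exact_mod_cast hr.ne'
  · exact denom_pos hu hv

lemma discDist_lower {a : ℂ} {r : ℝ} (hr : 0 < r) {z w : ℂ}
    (hz : z ∈ ball a r) (hw : w ∈ ball a r) :
    ‖z - w‖ / (4 * r) ≤ discDist a r z w := by
  rw [discDist_eq hr]
  have hu := mem_unit hr hz
  have hv := mem_unit hr hw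
  set u := (z - a) / (r:ℂ)
  set v := (w - a) / (r:ℂ)
  have hden : ‖1 - (starRingEnd ℂ) u * v‖ ≤ 2 := by
    calc ‖1 - (starRingEnd ℂ) u * v‖
        ≤ ‖1‖ + ‖(starRingEnd ℂ) u * v‖ := norm_sub_le _ _
      _ ≤ 2 := by
          rw [norm_one, norm_mul, Complex.norm_conj]
          nlinarith [norm_nonneg u, norm_nonneg v]
  have habs : ‖u - v‖ = ‖z - w‖ / r := by
    have : u - v = (z - w) / (r:ℂ) := by rw [div_sub_div_same]; ring_nf
    rw [this, norm_div, Complex.norm_real, Real.norm_eq_abs, abs_of_pos hr]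
  have hlow : ‖u - v‖ / 2 ≤ ‖mob u v‖ := by
    have he : ‖mob u v‖
        = ‖u - v‖ / ‖1 - (starRingEnd ℂ) u * v‖ := by
      rw [mob, norm_div, norm_sub_rev v u]
    rw [he]
    exact div_le_div_of_nonneg_left (norm_nonneg _) (denom_pos hu hv) hden
  calc ‖z - w‖ / (4 * r) = (‖u - v‖) / 4 := by rw [habs]; ring
    _ ≤ ‖mob u v‖ / 2 := by linarith
    _ ≤ arctanh (‖mob u v‖) := half_le_arctanh (norm_nonneg _) (abs_mob_lt_one hu hv)

lemma discDist_upper {z0 : ℂ} {ε : ℝ} (hε : 0 < ε) {z w : ℂ}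
    (hz : z ∈ ball z0 (ε/8)) (hw : w ∈ ball z0 (ε/8)) :
    discDist z0 ε z w ≤ (4/ε) * ‖z - w‖ := by
  have hz' : z ∈ ball z0 ε := ball_subset_ball (by linarith) hz
  have hw' : w ∈ ball z0 ε := ball_subset_ball (by linarith) hw
  rw [discDist_eq hε]
  have hu := mem_unit hε hz'
  have hv := mem_unit hε hw'
  set u := (z - z0) / (ε:ℂ) with hudef
  set v := (w - z0) / (ε:ℂ) with hvdef
  have hu8 : ‖u‖ < 1/8 := by
    rw [hudef, norm_div, Complex.norm_real, Real.norm_eq_abs, abs_of_pos hε, div_lt_div_iff₀ hε (by norm_num : (0:ℝ) < 8)]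
    rw [mem_ball, Complex.dist_eq] at hz
    linarith
  have hv8 : ‖v‖ < 1/8 := by
    rw [hvdef, norm_div, Complex.norm_real, Real.norm_eq_abs, abs_of_pos hε, div_lt_div_iff₀ hε (by norm_num : (0:ℝ) < 8)]
    rw [mem_ball, Complex.dist_eq] at hw
    linarith
  have hden : (1:ℝ)/2 ≤ ‖1 - (starRingEnd ℂ) u * v‖ := by
    have h1 : ‖(starRingEnd ℂ) u * v‖ ≤ 1/2 := by
      rw [norm_mul, Complex.norm_conj]
      nlinarith [norm_nonneg u, norm_nonneg v]
    have h2 : (1:ℝ) - ‖(starRingEnd ℂ) u * v‖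
        ≤ ‖1 - (starRingEnd ℂ) u * v‖ := by
      have := norm_sub_norm_le (1:ℂ) ((starRingEnd ℂ) u * v)
      simpa using this
    linarith
  have habs : ‖u - v‖ = ‖z - w‖ / ε := by
    have he : u - v = (z - w) / (ε:ℂ) := by rw [hudef, hvdef]; ring
    rw [he, norm_div, Complex.norm_real, Real.norm_eq_abs, abs_of_pos hε]
  have hmoble : ‖mob u v‖ ≤ 2 * ‖u - v‖ := by
    have he : ‖mob u v‖
        = ‖u - v‖ / ‖1 - (starRingEnd ℂ) u * v‖ := by
      rw [mob, norm_div, norm_sub_rev v u]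
    rw [he, div_le_iff₀ (denom_pos hu hv)]
    nlinarith [norm_nonneg (u - v)]
  have hsmall : ‖mob u v‖ ≤ 1/2 := by
    have huv : ‖u - v‖ ≤ 1/4 := by
      have := norm_sub_le u v
      linarith
    linarith
  have := arctanh_le_two_mul (norm_nonneg (mob u v)) hsmall
  have hfin : 2 * ‖mob u v‖ ≤ (4/ε) * ‖z - w‖ := by
    rw [habs] at hmoble
    have : (4:ℝ) * (‖z - w‖ / ε) = (4/ε) * ‖z - w‖ := by ring
    linarith
  linarith

/-- Schwarz–Pick for maps between general discs. -/
lemma discDist_schwarzPick {a b : ℂ} {r s : ℝ} (hr : 0 < r) (hs : 0 < s)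
    {φ : ℂ → ℂ} (hφ : DifferentiableOn ℂ φ (ball b s))
    (hm : MapsTo φ (ball b s) (ball a r)) {ζ ζ' : ℂ}
    (hζ : ζ ∈ ball b s) (hζ' : ζ' ∈ ball b s) :
    discDist a r (φ ζ) (φ ζ') ≤ discDist b s ζ ζ' := by
  have hsc : (s:ℂ) ≠ 0 := by exact_mod_cast hs.ne'
  set aff : ℂ → ℂ := fun u => b + (s:ℂ) * u with haff
  have haffm : MapsTo aff (ball (0:ℂ) 1) (ball b s) := by
    intro u hu
    rw [mem_ball_zero_iff] at hu
    rw [mem_ball, Complex.dist_eq, haff]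
    simp only [add_sub_cancel_left]
    rw [norm_mul, Complex.norm_real, Real.norm_eq_abs, abs_of_pos hs]
    nlinarith [norm_nonneg u]
  set g : ℂ → ℂ := fun u => (φ (aff u) - a) / (r:ℂ) with hg
  have hgd : DifferentiableOn ℂ g (ball (0:ℂ) 1) := by
    apply DifferentiableOn.div_const
    apply DifferentiableOn.sub_const
    exact hφ.comp ((differentiable_const b).add ((differentiable_const _).mul differentiable_id)).differentiableOn haffm
  have hgm : MapsTo g (ball (0:ℂ) 1) (ball (0:ℂ) 1) := by
    intro u hu
    rw [mem_ball_zero_iff]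
    exact mem_unit hr (hm (haffm hu))
  have hu : (ζ - b)/(s:ℂ) ∈ ball (0:ℂ) 1 := by
    rw [mem_ball_zero_iff]; exact mem_unit hs hζ
  have hv : (ζ' - b)/(s:ℂ) ∈ ball (0:ℂ) 1 := by
    rw [mem_ball_zero_iff]; exact mem_unit hs hζ'
  have hgu : g ((ζ - b)/(s:ℂ)) = (φ ζ - a) / (r:ℂ) := by
    rw [hg]; simp only [haff]
    congr 2
    field_simp
    ring_nf
  have hgv : g ((ζ' - b)/(s:ℂ)) = (φ ζ' - a) / (r:ℂ) := by
    rw [hg]; simp only [haff]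
    congr 2
    field_simp
    ring_nf
  have hSP := schwarzPick hgd hgm hu hv
  rw [hgu, hgv] at hSP
  rw [discDist_eq hr, discDist_eq hs]
  rw [mem_ball_zero_iff] at hu hv
  exact arctanh_le_arctanh (norm_nonneg _) hSP (abs_mob_lt_one hu hv)


lemma poincareDist_eq_discDist {z0 w w' : ℂ} {ε : ℝ} (hε : 0 < ε) :
    poincareDist ((w - z0)/(ε:ℂ)) ((w' - z0)/(ε:ℂ)) = discDist z0 ε w w' := by
  rw [poincareDist_eq_mob, discDist_eq hε]

lemma chain_bound {E : Type*} [NormedAddCommGroup E] [NormedSpace ℂ E]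
    {V : Type*} [TopologicalSpace V] [ChartedSpace E V] [MetricSpace V]
    (W : Set V)
    (hW : ∀ p q : V, p ∈ W → q ∈ W → ENNReal.ofReal (dist p q) ≤ kobayashiDistOn E W p q)
    {U : Set ℂ} {f : ℂ → V} (hf : MDifferentiableOn 𝓘(ℂ, ℂ) 𝓘(ℂ, E) f U)
    {z0 : ℂ} {ε : ℝ} (hε : 0 < ε) (hsub : ball z0 ε ⊆ U)
    (him : f '' ball z0 ε ⊆ W) {w w' : ℂ}
    (hw : w ∈ ball z0 ε) (hw' : w' ∈ ball z0 ε) :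
    dist (f w) (f w') ≤ discDist z0 ε w w' := by
  have hεc : (ε:ℂ) ≠ 0 := by exact_mod_cast hε.ne'
  set aff : ℂ → ℂ := fun ζ => z0 + (ε:ℂ) * ζ with haff
  have haffm : MapsTo aff (ball (0:ℂ) 1) (ball z0 ε) := by
    intro u hu
    rw [mem_ball_zero_iff] at hu
    rw [mem_ball, Complex.dist_eq, haff]
    simp only [add_sub_cancel_left]
    rw [norm_mul, Complex.norm_real, Real.norm_eq_abs, abs_of_pos hε]
    nlinarith [norm_nonneg u]
  set g : ℂ → V := f ∘ aff with hg
  have hgd : MDifferentiableOn 𝓘(ℂ, ℂ) 𝓘(ℂ, E) g (ball (0:ℂ) 1) := by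
    apply hf.comp
    · exact ((differentiable_const z0).add ((differentiable_const _).mul differentiable_id)).differentiableOn.mdifferentiableOn
    · intro u hu; exact hsub (haffm hu)
  have hgim : g '' ball (0:ℂ) 1 ⊆ W := by
    rw [hg, Set.image_comp]
    exact (Set.image_mono haffm.image_subset).trans him
  set u := (w - z0)/(ε:ℂ) with hudef
  set v := (w' - z0)/(ε:ℂ) with hvdef
  have hu1 : u ∈ ball (0:ℂ) 1 := by
    rw [mem_ball_zero_iff]; exact mem_unit hε hw
  have hv1 : v ∈ ball (0:ℂ) 1 := by
    rw [mem_ball_zero_iff]; exact mem_unit hε hw'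
  have hgu : g u = f w := by
    rw [hg]; simp only [Function.comp_apply, haff, hudef]
    congr 1
    field_simp
    ring
  have hgv : g v = f w' := by
    rw [hg]; simp only [Function.comp_apply, haff, hvdef]
    congr 1
    field_simp
    ring
  have hkob : kobayashiDistOn E W (f w) (f w')
      ≤ ENNReal.ofReal (poincareDist u v) := by
    rw [kobayashiDistOn]
    refine iInf_le_of_le 0 ?_
    refine iInf_le_of_le (fun _ => g) ?_
    refine iInf_le_of_le (fun _ => (u, v)) ?_
    refine iInf_le_of_le (fun _ => hgd) ?_
    refine iInf_le_of_le (fun _ => hgim) ?_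
    refine iInf_le_of_le (fun _ => ⟨hu1, hv1⟩) ?_
    refine iInf_le_of_le hgu ?_
    refine iInf_le_of_le hgv ?_
    refine iInf_le_of_le (fun j => j.elim0) ?_
    rw [Fin.sum_univ_one]
  have hadm := hW (f w) (f w') (him (Set.mem_image_of_mem f hw)) (him (Set.mem_image_of_mem f hw'))
  have := hadm.trans hkob
  rw [poincareDist_eq_discDist hε] at this
  exact (ENNReal.ofReal_le_ofReal_iff (discDist_nonneg hε hw hw')).mp this

lemma LipConst_le {V : Type*} [MetricSpace V] {f : ℂ → V} {a : ℂ} {r M : ℝ}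
    (h : ∀ w ∈ ball a r, ∀ w' ∈ ball a r, w ≠ w' →
      dist (f w) (f w') / discDist a r w w' ≤ M) :
    LipConst f a r ≤ ENNReal.ofReal M :=
  iSup_le fun w => iSup_le fun hw => iSup_le fun w' => iSup_le fun hw' =>
    iSup_le fun hne => ENNReal.ofReal_le_ofReal (h w hw w' hw' hne)

lemma le_LipConst {V : Type*} [MetricSpace V] (f : ℂ → V) {a : ℂ} {r : ℝ} {w w' : ℂ}
    (hw : w ∈ ball a r) (hw' : w' ∈ ball a r) (hne : w ≠ w') :
    ENNReal.ofReal (dist (f w) (f w') / discDist a r w w') ≤ LipConst f a r :=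
  le_iSup_of_le w (le_iSup_of_le hw (le_iSup_of_le w' (le_iSup_of_le hw'
    (le_iSup_of_le hne le_rfl))))

lemma LipConst_congr {V : Type*} [MetricSpace V] {f g : ℂ → V} {a : ℂ} {r : ℝ}
    (h : ∀ w ∈ ball a r, f w = g w) : LipConst f a r = LipConst g a r := by
  apply le_antisymm <;>
  · refine iSup_le fun w => iSup_le fun hw => iSup_le fun w' => iSup_le fun hw' =>
      iSup_le fun hne => ?_
    first
      | (rw [h w hw, h w' hw']; exact le_LipConst _ hw hw' hne)
      | (rw [← h w hw, ← h w' hw']; exact le_LipConst _ hw hw' hne)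

lemma lip_le_lip {V : Type*} [MetricSpace V] (f : ℂ → V) {a b : ℂ} {r s : ℝ}
    (hr : 0 < r) (hs : 0 < s) {φ ψ : ℂ → ℂ}
    (hφ : DifferentiableOn ℂ φ (ball b s)) (hφm : MapsTo φ (ball b s) (ball a r))
    (hψφ : ∀ ζ ∈ ball b s, ψ (φ ζ) = ζ) :
    LipConst (f ∘ φ) b s ≤ LipConst f a r := by
  refine iSup_le fun ζ => iSup_le fun hζ => iSup_le fun ζ' => iSup_le fun hζ' =>
    iSup_le fun hne => ?_
  have hw := hφm hζ
  have hw' := hφm hζ'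
  have hne' : φ ζ ≠ φ ζ' := fun h => hne (by rw [← hψφ ζ hζ, ← hψφ ζ' hζ', h])
  have hSP := discDist_schwarzPick hr hs hφ hφm hζ hζ'
  have hpos := discDist_pos hr hw hw' hne'
  have hdivle : dist ((f ∘ φ) ζ) ((f ∘ φ) ζ') / discDist b s ζ ζ'
      ≤ dist (f (φ ζ)) (f (φ ζ')) / discDist a r (φ ζ) (φ ζ') := by
    simp only [Function.comp_apply]
    exact div_le_div_of_nonneg_left dist_nonneg hpos hSP
  exact (ENNReal.ofReal_le_ofReal hdivle).trans (le_LipConst f hw hw' hne')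

end Aux14

open Aux14

theorem statement_14 {E : Type*} [NormedAddCommGroup E] [NormedSpace ℂ E]
    [FiniteDimensional ℂ E]
    (V : Type*) [MetricSpace V] [ChartedSpace E V] [IsManifold 𝓘(ℂ, E) (⊤ : WithTop ℕ∞) V]
    [CompactSpace V] [ConnectedSpace V] (hδ : IsAdmissible E V)
    (a : ℂ) (r : ℝ) (hr : 0 < r)
    (U : Set ℂ) (hU : IsOpen U) (hUr : closure (ball a r) ⊆ U)
    (f : ℂ → V) (hf : MDifferentiableOn 𝓘(ℂ, ℂ) 𝓘(ℂ, E) f U) :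
    LipConst f a r < ⊤ ∧
      ∀ (b : ℂ) (s : ℝ), 0 < s → ∀ φ ψ : ℂ → ℂ,
        DifferentiableOn ℂ φ (ball b s) → DifferentiableOn ℂ ψ (ball a r) →
        Set.MapsTo φ (ball b s) (ball a r) → Set.MapsTo ψ (ball a r) (ball b s) →
        (∀ ζ ∈ ball b s, ψ (φ ζ) = ζ) → (∀ w ∈ ball a r, φ (ψ w) = w) →
        LipConst (f ∘ φ) b s = LipConst f a r := by
  obtain ⟨Ufam, hUfam⟩ := hδ
  have hcont : ContinuousOn f U := hf.continuousOn
  set K := closedBall a r with hKdef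
  have hKU : K ⊆ U := by
    rw [hKdef, ← closure_ball a hr.ne']
    exact hUr
  have hex : ∀ z : ℂ, z ∈ K → ∃ ε : ℝ, 0 < ε ∧ ball z ε ⊆ U ∧
      f '' ball z ε ⊆ Ufam (f z) := by
    intro z hz
    have hO : IsOpen (U ∩ f ⁻¹' (Ufam (f z))) :=
      hcont.isOpen_inter_preimage hU (hUfam (f z)).2.1
    have hzO : z ∈ U ∩ f ⁻¹' (Ufam (f z)) := ⟨hKU hz, (hUfam (f z)).1⟩
    obtain ⟨ε, hε, hball⟩ := Metric.isOpen_iff.mp hO z hzO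
    exact ⟨ε, hε, hball.trans inter_subset_left,
      by rw [image_subset_iff]; exact hball.trans inter_subset_right⟩
  choose! ε hε0 hεU hεim using hex
  have hcov : K ⊆ ⋃ z ∈ K, ball z (ε z / 16) := by
    intro z hz
    exact mem_biUnion hz (mem_ball_self (by have := hε0 z hz; linarith))
  obtain ⟨T, hTK, hTfin, hTcov⟩ := (isCompact_closedBall a r).elim_finite_subcover_image
    (fun z hz => isOpen_ball) hcov
  set t := hTfin.toFinset with htdef
  have htK : ∀ z ∈ t, z ∈ K := fun z hz => hTK (hTfin.mem_toFinset.mp hz)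
  have htne : t.Nonempty := by
    have haK : a ∈ K := mem_closedBall_self hr.le
    obtain ⟨z, hzT, _⟩ := mem_iUnion₂.mp (hTcov haK)
    exact ⟨z, hTfin.mem_toFinset.mpr hzT⟩
  set η := t.inf' htne (fun z => ε z / 16) with hηdef
  set C := t.sup' htne (fun z => 4 / ε z) with hCdef
  have hη : 0 < η := by
    rw [hηdef, Finset.lt_inf'_iff]
    intro z hz
    have := hε0 z (htK z hz)
    linarith
  have hC : 0 < C := by
    obtain ⟨z0, hz0⟩ := htne
    have h1 : (0:ℝ) < 4 / ε z0 := by have := hε0 z0 (htK z0 hz0); positivity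
    exact lt_of_lt_of_le h1 (Finset.le_sup' (fun z => 4 / ε z) hz0)
  have hLip : ∀ w ∈ ball a r, ∀ w' ∈ ball a r, dist w w' < η →
      dist (f w) (f w') ≤ C * dist w w' := by
    intro w hw w' hw' hd
    have hwK : w ∈ K := ball_subset_closedBall hw
    obtain ⟨z, hzT, hwz⟩ := mem_iUnion₂.mp (hTcov hwK)
    have hzt : z ∈ t := hTfin.mem_toFinset.mpr hzT
    have hzK := htK z hzt
    have hεz := hε0 z hzK
    have hη_le : η ≤ ε z / 16 := Finset.inf'_le (fun z => ε z / 16) hzt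
    rw [mem_ball] at hwz
    have hw8 : w ∈ ball z (ε z / 8) := by rw [mem_ball]; linarith
    have hw'8 : w' ∈ ball z (ε z / 8) := by
      rw [mem_ball]
      calc dist w' z ≤ dist w' w + dist w z := dist_triangle _ _ _
        _ < η + ε z / 16 := by rw [dist_comm w' w]; exact add_lt_add hd hwz
        _ ≤ ε z / 8 := by linarith
    have hsub8 : ball z (ε z / 8) ⊆ ball z (ε z) := ball_subset_ball (by linarith)
    have hcb := chain_bound (Ufam (f z)) (fun p q hp hq => (hUfam (f z)).2.2.2 p q hp hq)
      hf hεz (hεU z hzK) (hεim z hzK) (hsub8 hw8) (hsub8 hw'8)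
    have hup := discDist_upper hεz hw8 hw'8
    have hCz : 4 / ε z ≤ C := Finset.le_sup' (fun z => 4 / ε z) hzt
    calc dist (f w) (f w') ≤ discDist z (ε z) w w' := hcb
      _ ≤ (4 / ε z) * ‖w - w'‖ := hup
      _ ≤ C * dist w w' := by
          rw [Complex.dist_eq]
          exact mul_le_mul_of_nonneg_right hCz (norm_nonneg _)
  have hdiam : ∀ p q : V, dist p q ≤ diam (univ : Set V) := fun p q =>
    dist_le_diam_of_mem isCompact_univ.isBounded (mem_univ p) (mem_univ q)
  set M := max (4 * r * C) (diam (univ : Set V) * (4 * r) / η) with hMdef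
  have hbound : ∀ w ∈ ball a r, ∀ w' ∈ ball a r, w ≠ w' →
      dist (f w) (f w') / discDist a r w w' ≤ M := by
    intro w hw w' hw' hne
    have hDlow := discDist_lower hr hw hw'
    have hd0 : 0 < dist w w' := dist_pos.mpr hne
    have hdabs : dist w w' = ‖w - w'‖ := Complex.dist_eq w w'
    have hDlow' : dist w w' / (4 * r) ≤ discDist a r w w' := by rw [hdabs]; exact hDlow
    rcases lt_or_ge (dist w w') η with hcase | hcase
    · have hnum := hLip w hw w' hw' hcase
      calc dist (f w) (f w') / discDist a r w w'
          ≤ (C * dist w w') / (dist w w' / (4 * r)) :=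
            div_le_div₀ (by positivity) hnum (by positivity) hDlow'
        _ = 4 * r * C := by field_simp
        _ ≤ M := le_max_left _ _
    · have hηD : η / (4 * r) ≤ discDist a r w w' :=
        le_trans ((div_le_div_iff_of_pos_right (by positivity)).mpr hcase) hDlow'
      calc dist (f w) (f w') / discDist a r w w'
          ≤ diam (univ : Set V) / (η / (4 * r)) :=
            div_le_div₀ diam_nonneg (hdiam _ _) (by positivity) hηD
        _ = diam (univ : Set V) * (4 * r) / η := by
            rw [div_div_eq_mul_div]
        _ ≤ M := le_max_right _ _
  constructor
  · exact lt_of_le_of_lt (LipConst_le hbound) ENNReal.ofReal_lt_top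
  · intro b s hs φ ψ hφ hψ hφm hψm hψφ hφψ
    apply le_antisymm
    · exact lip_le_lip f hr hs hφ hφm hψφ
    · have h2 := lip_le_lip (f ∘ φ) hs hr hψ hψm hφψ
      have h3 : LipConst f a r = LipConst ((f ∘ φ) ∘ ψ) a r :=
        LipConst_congr (fun w hw => by simp only [Function.comp_apply, hφψ w hw])
      rw [h3]
      exact h2

end
end

section
/- Let a ∈ ℂ, R > 0, and r ∈ (0,R), and let d_{𝔻(a,R)} denote the Kobayashi pseudodistance of the disc 𝔻(a,R) regarded as a complex manifold. Then for all z, w with |z − a| ≤ r and |w − a| ≤ r, one has |z − w|/R ≤ d_{𝔻(a,R)}(z,w) ≤ R·|z − w|/(R² − r²). -/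
open Filter Metric Set Topology
open scoped Manifold ENNReal

noncomputable section

namespace KobAux
open Complex

def mob (q ζ : ℂ) : ℂ := (q - ζ) / (1 - (starRingEnd ℂ) q * ζ)

lemma normSq_identity (q ζ : ℂ) :
    Complex.normSq (1 - (starRingEnd ℂ) q * ζ) - Complex.normSq (q - ζ)
      = (1 - Complex.normSq q) * (1 - Complex.normSq ζ) := by
  simp only [Complex.normSq_apply, Complex.sub_re, Complex.sub_im, Complex.mul_re,
    Complex.mul_im, Complex.one_re, Complex.one_im, Complex.conj_re, Complex.conj_im]
  ring

lemma denom_ne (q ζ : ℂ) (hq : Norm.norm q < 1) (hζ : Norm.norm ζ < 1) :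
    (1 : ℂ) - (starRingEnd ℂ) q * ζ ≠ 0 := by
  intro h
  have h1 : Norm.norm ((starRingEnd ℂ) q * ζ) < 1 := by
    rw [norm_mul, Complex.norm_conj]
    nlinarith [norm_nonneg q, norm_nonneg ζ]
  have : (1 : ℂ) = (starRingEnd ℂ) q * ζ := by linear_combination h
  rw [← this] at h1
  simp at h1

lemma abs_lt_abs_denom (q ζ : ℂ) (hq : Norm.norm q < 1) (hζ : Norm.norm ζ < 1) :
    Norm.norm (q - ζ) < Norm.norm (1 - (starRingEnd ℂ) q * ζ) := by
  have h := normSq_identity q ζ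
  rw [← Complex.sq_norm, ← Complex.sq_norm, ← Complex.sq_norm, ← Complex.sq_norm] at h
  have h1 : 0 < 1 - Norm.norm q ^ 2 := by nlinarith [norm_nonneg q]
  have h2 : 0 < 1 - Norm.norm ζ ^ 2 := by nlinarith [norm_nonneg ζ]
  have : Norm.norm (q - ζ) ^ 2 < Norm.norm (1 - (starRingEnd ℂ) q * ζ) ^ 2 := by
    nlinarith [mul_pos h1 h2]
  exact lt_of_pow_lt_pow_left₀ 2 (norm_nonneg _) this

lemma mob_mem (q ζ : ℂ) (hq : Norm.norm q < 1) (hζ : Norm.norm ζ < 1) :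
    Norm.norm (mob q ζ) < 1 := by
  rw [mob, norm_div, div_lt_one (norm_pos_iff.mpr (denom_ne q ζ hq hζ))]
  exact abs_lt_abs_denom q ζ hq hζ

lemma mob_zero (q : ℂ) : mob q 0 = q := by simp [mob]

lemma one_sub_conj_mul_self_ne (q : ℂ) (hq : Norm.norm q < 1) :
    (1 : ℂ) - (starRingEnd ℂ) q * q ≠ 0 := by
  rw [Complex.conj_mul']
  intro h
  have : ((Norm.norm q : ℝ) : ℂ) ^ 2 = 1 := by
    push_cast; linear_combination -h
  rw [← Complex.ofReal_pow, ← Complex.ofReal_one, Complex.ofReal_inj] at this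
  nlinarith [norm_nonneg q]

lemma mob_mob (q ζ : ℂ) (hq : Norm.norm q < 1) (hζ : Norm.norm ζ < 1) :
    mob q (mob q ζ) = ζ := by
  have hd := denom_ne q ζ hq hζ
  have h1q := one_sub_conj_mul_self_ne q hq
  have e1 : q - mob q ζ = ζ * (1 - (starRingEnd ℂ) q * q) / (1 - (starRingEnd ℂ) q * ζ) := by
    rw [mob, eq_div_iff hd, sub_mul, div_mul_cancel₀ _ hd]; ring
  have e2 : 1 - (starRingEnd ℂ) q * mob q ζ
      = (1 - (starRingEnd ℂ) q * q) / (1 - (starRingEnd ℂ) q * ζ) := by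
    rw [mob]; field_simp; ring
  rw [mob, e1, e2, div_eq_iff (div_ne_zero h1q hd)]
  ring

lemma hasDerivAt_mob (q ζ : ℂ) (h : (1 : ℂ) - (starRingEnd ℂ) q * ζ ≠ 0) :
    HasDerivAt (mob q)
      (((starRingEnd ℂ) q * q - 1) / ((1 - (starRingEnd ℂ) q * ζ) ^ 2)) ζ := by
  have h1 : HasDerivAt (fun x : ℂ => q - x) (-1) ζ := by
    simpa using (hasDerivAt_id ζ).const_sub q
  have h2 : HasDerivAt (fun x : ℂ => 1 - (starRingEnd ℂ) q * x) (-(starRingEnd ℂ) q) ζ := by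
    simpa using ((hasDerivAt_id ζ).const_mul ((starRingEnd ℂ) q)).const_sub 1
  have := h1.div h2 h
  refine this.congr_deriv ?_
  congr 1
  ring

lemma mob_self (q : ℂ) : mob q q = 0 := by simp [mob]

lemma toReal_one_sub (t : ℂ) :
    (starRingEnd ℂ) t * t - 1 = ((Norm.norm t ^ 2 - 1 : ℝ) : ℂ) := by
  rw [Complex.conj_mul']; push_cast
  simp [Complex.sq_norm, Complex.normSq_eq_norm_sq]

lemma abs_d1 (t : ℂ) (ht : Norm.norm t < 1) :
    Norm.norm ((starRingEnd ℂ) t * t - 1) = 1 - Norm.norm t ^ 2 := by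
  rw [toReal_one_sub, Complex.norm_real, Real.norm_eq_abs, abs_of_nonpos] <;>
    nlinarith [norm_nonneg t]


lemma mem_ball_iff (ζ : ℂ) : ζ ∈ ball (0 : ℂ) 1 ↔ Norm.norm ζ < 1 := by
  simp [mem_ball_zero_iff]

lemma diffOn_mob (q : ℂ) (hq : Norm.norm q < 1) :
    DifferentiableOn ℂ (mob q) (ball (0 : ℂ) 1) := fun ζ hζ =>
  (hasDerivAt_mob q ζ (denom_ne q ζ hq ((mem_ball_iff ζ).mp hζ))).differentiableAt.differentiableWithinAt

lemma mapsTo_mob (q : ℂ) (hq : Norm.norm q < 1) :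
    MapsTo (mob q) (ball (0 : ℂ) 1) (ball (0 : ℂ) 1) := fun ζ hζ =>
  (mem_ball_iff _).mpr (mob_mem q ζ hq ((mem_ball_iff ζ).mp hζ))

/-- Schwarz–Pick derivative estimate. -/
lemma sp_deriv {f : ℂ → ℂ} (hd : DifferentiableOn ℂ f (ball 0 1))
    (hm : MapsTo f (ball (0 : ℂ) 1) (ball (0 : ℂ) 1)) {t : ℂ} (ht : Norm.norm t < 1) :
    Norm.norm (deriv f t) ≤ 1 / (1 - Norm.norm t ^ 2) := by
  set c := f t with hc
  have htb : t ∈ ball (0 : ℂ) 1 := (mem_ball_iff t).mpr ht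
  have hcb : Norm.norm c < 1 := (mem_ball_iff c).mp (hm htb)
  -- the composed map
  set k : ℂ → ℂ := (mob c) ∘ f ∘ (mob t) with hk
  have hkd : DifferentiableOn ℂ k (ball 0 1) :=
    ((diffOn_mob c hcb).comp (hd.comp (diffOn_mob t ht) (mapsTo_mob t ht))
      (hm.comp (mapsTo_mob t ht)))
  have hkm : MapsTo k (ball (0 : ℂ) 1) (ball (0 : ℂ) 1) :=
    (mapsTo_mob c hcb).comp (hm.comp (mapsTo_mob t ht))
  have hk0 : k 0 = 0 := by simp [hk, Function.comp, mob_zero, ← hc, mob_self]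
  have hschwarz : Norm.norm (deriv k 0) ≤ 1 :=
    Complex.norm_deriv_le_one_of_mapsTo_ball hkd (by rw [hk0]; exact hkm.mono_right ball_subset_closedBall) one_pos
  -- compute deriv k 0
  have h1 : HasDerivAt (mob t) ((starRingEnd ℂ) t * t - 1) 0 := by
    simpa using hasDerivAt_mob t 0 (by simpa using denom_ne t 0 ht (by simp))
  have hft : HasDerivAt f (deriv f t) t :=
    (hd.differentiableAt (isOpen_ball.mem_nhds htb)).hasDerivAt
  have h3 : HasDerivAt (mob c)
      (((starRingEnd ℂ) c * c - 1) / ((1 - (starRingEnd ℂ) c * c) ^ 2)) c :=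
    hasDerivAt_mob c c (one_sub_conj_mul_self_ne c hcb)
  have hft' : HasDerivAt f (deriv f t) (mob t 0) := by rw [mob_zero]; exact hft
  have h2 : HasDerivAt (f ∘ mob t) (deriv f t * ((starRingEnd ℂ) t * t - 1)) 0 :=
    hft'.comp 0 h1
  have h3' : HasDerivAt (mob c)
      (((starRingEnd ℂ) c * c - 1) / ((1 - (starRingEnd ℂ) c * c) ^ 2)) ((f ∘ mob t) 0) := by
    simpa [Function.comp, mob_zero] using h3
  have hkder : HasDerivAt k
      ((((starRingEnd ℂ) c * c - 1) / ((1 - (starRingEnd ℂ) c * c) ^ 2)) *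
        (deriv f t * ((starRingEnd ℂ) t * t - 1))) 0 := h3'.comp 0 h2
  rw [hkder.deriv] at hschwarz
  have e1 : Norm.norm ((starRingEnd ℂ) t * t - 1) = 1 - Norm.norm t ^ 2 := abs_d1 t ht
  have e3 : Norm.norm (((starRingEnd ℂ) c * c - 1) / ((1 - (starRingEnd ℂ) c * c) ^ 2))
      = 1 / (1 - Norm.norm c ^ 2) := by
    rw [norm_div, norm_pow]
    rw [abs_d1 c hcb]
    have : Norm.norm (1 - (starRingEnd ℂ) c * c) = 1 - Norm.norm c ^ 2 := by
      have : (1 : ℂ) - (starRingEnd ℂ) c * c = -((starRingEnd ℂ) c * c - 1) := by ring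
      rw [this, norm_neg, abs_d1 c hcb]
    rw [this]
    have hpos : 0 < 1 - Norm.norm c ^ 2 := by nlinarith [norm_nonneg c]
    field_simp
  rw [norm_mul, norm_mul, e1, e3] at hschwarz
  have hposc : 0 < 1 - Norm.norm c ^ 2 := by nlinarith [norm_nonneg c]
  have hpost : 0 < 1 - Norm.norm t ^ 2 := by nlinarith [norm_nonneg t]
  rw [one_div, inv_mul_le_iff₀ hposc] at hschwarz
  rw [le_div_iff₀ hpost]
  nlinarith [norm_nonneg (deriv f t)]


lemma arctanh_zero : arctanh 0 = 0 := by simp [arctanh]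

lemma hasDerivAt_arctanh {t : ℝ} (h1 : -1 < t) (h2 : t < 1) :
    HasDerivAt arctanh (1 / (1 - t ^ 2)) t := by
  have ht1 : (0:ℝ) < 1 + t := by linarith
  have ht2 : (0:ℝ) < 1 - t := by linarith
  have hnum : HasDerivAt (fun x : ℝ => 1 + x) 1 t := by
    simpa using (hasDerivAt_id t).const_add 1
  have hden : HasDerivAt (fun x : ℝ => 1 - x) (-1) t := by
    simpa using (hasDerivAt_id t).const_sub 1
  have hdiv : HasDerivAt (fun x : ℝ => (1 + x) / (1 - x))
      ((1 * (1 - t) - (1 + t) * (-1)) / (1 - t) ^ 2) t := hnum.div hden ht2.ne'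
  have hlog := (hdiv.log (by positivity)).div_const 2
  have h3 : (1:ℝ) - t ^ 2 ≠ 0 := by nlinarith
  have : (1 * (1 - t) - (1 + t) * (-1)) / (1 - t) ^ 2 / ((1 + t) / (1 - t)) / 2
      = 1 / (1 - t ^ 2) := by
    field_simp
    ring
  rw [this] at hlog
  exact hlog

lemma arctanh_le_div {s : ℝ} (h0 : 0 ≤ s) (h1 : s < 1) : arctanh s ≤ s / (1 - s) := by
  have hs : (0:ℝ) < 1 - s := by linarith
  have : Real.log ((1 + s) / (1 - s)) ≤ (1 + s) / (1 - s) - 1 :=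
    Real.log_le_sub_one_of_pos (by positivity)
  have e : (1 + s) / (1 - s) - 1 = 2 * (s / (1 - s)) := by field_simp; ring
  rw [arctanh]
  rw [e] at this
  linarith [this]

/-- Key integral estimate: a holomorphic self-map of the disc moves `0` and a real
point `τ` at most hyperbolic distance `arctanh τ` apart. -/
lemma key_integral {g : ℂ → ℂ} (hd : DifferentiableOn ℂ g (ball 0 1))
    (hm : MapsTo g (ball (0 : ℂ) 1) (ball (0 : ℂ) 1)) {τ : ℝ} (h0 : 0 ≤ τ) (h1 : τ < 1) :
    Norm.norm (g τ - g 0) ≤ arctanh τ := by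
  have hmem : ∀ t : ℝ, t ∈ uIcc (0:ℝ) τ → Norm.norm (t : ℂ) < 1 := by
    intro t htm
    rw [uIcc_of_le h0] at htm
    rw [Complex.norm_real, Real.norm_eq_abs, _root_.abs_of_nonneg htm.1]
    exact lt_of_le_of_lt htm.2 h1
  have hcont : ContinuousOn (deriv g) (ball (0:ℂ) 1) :=
    ((hd.analyticOnNhd isOpen_ball).deriv).continuousOn
  have hglue : ∀ t : ℝ, t ∈ uIcc (0:ℝ) τ →
      HasDerivAt (fun s : ℝ => g (s : ℂ)) (deriv g (t : ℂ)) t := by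
    intro t htm
    have : DifferentiableAt ℂ g (t : ℂ) :=
      hd.differentiableAt (isOpen_ball.mem_nhds ((mem_ball_iff _).mpr (hmem t htm)))
    exact this.hasDerivAt.comp_ofReal
  have hint : IntervalIntegrable (fun t : ℝ => deriv g (t : ℂ)) MeasureTheory.volume 0 τ := by
    apply ContinuousOn.intervalIntegrable
    apply hcont.comp Complex.continuous_ofReal.continuousOn
    intro t htm
    exact (mem_ball_iff _).mpr (hmem t htm)
  have heq : (∫ t in (0:ℝ)..τ, deriv g (t : ℂ)) = g τ - g 0 := by
    have := intervalIntegral.integral_eq_sub_of_hasDerivAt hglue hint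
    simpa using this
  have hboundint : IntervalIntegrable (fun t : ℝ => 1 / (1 - t ^ 2)) MeasureTheory.volume 0 τ := by
    apply ContinuousOn.intervalIntegrable
    apply ContinuousOn.div continuousOn_const (by fun_prop)
    intro t htm
    have := hmem t htm
    rw [Complex.norm_real, Real.norm_eq_abs] at this
    nlinarith [abs_nonneg t, le_abs_self t, neg_abs_le t]
  have harctanh_nonneg : 0 ≤ arctanh τ := by
    rw [arctanh]
    have : (1:ℝ) ≤ (1 + τ) / (1 - τ) := by
      rw [le_div_iff₀ (by linarith)]
      linarith
    have := Real.log_nonneg this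
    linarith
  have hintineq : ‖∫ t in (0:ℝ)..τ, deriv g (t : ℂ)‖ ≤ |∫ t in (0:ℝ)..τ, 1 / (1 - t ^ 2)| := by
    apply intervalIntegral.norm_integral_le_abs_of_norm_le _ hboundint
    rw [MeasureTheory.ae_restrict_iff' measurableSet_uIoc]
    filter_upwards with t htm
    have htm' : t ∈ uIcc (0:ℝ) τ := uIoc_subset_uIcc htm
    have h := sp_deriv hd hm (hmem t htm')
    have habs : Norm.norm ((t:ℂ)) = |t| := by rw [Complex.norm_real, Real.norm_eq_abs]
    calc ‖deriv g (t:ℂ)‖ = Norm.norm (deriv g (t:ℂ)) := rfl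
      _ ≤ 1 / (1 - Norm.norm (t:ℂ) ^ 2) := h
      _ = 1 / (1 - t ^ 2) := by rw [habs, _root_.sq_abs]
  have hval : (∫ t in (0:ℝ)..τ, 1 / (1 - t ^ 2)) = arctanh τ := by
    have : (∫ t in (0:ℝ)..τ, 1 / (1 - t ^ 2)) = arctanh τ - arctanh 0 := by
      apply intervalIntegral.integral_eq_sub_of_hasDerivAt _ hboundint
      intro t htm
      rw [uIcc_of_le h0] at htm
      exact hasDerivAt_arctanh (by linarith [htm.1]) (lt_of_le_of_lt htm.2 h1)
    rw [this, arctanh_zero, sub_zero]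
  calc Norm.norm (g τ - g 0) = ‖g τ - g 0‖ := rfl
    _ = ‖∫ t in (0:ℝ)..τ, deriv g (t : ℂ)‖ := by rw [heq]
    _ ≤ |∫ t in (0:ℝ)..τ, 1 / (1 - t ^ 2)| := hintineq
    _ = arctanh τ := by rw [hval, _root_.abs_of_nonneg harctanh_nonneg]


/-- Schwarz–Pick distance estimate. -/
lemma sp_dist {f : ℂ → ℂ} (hd : DifferentiableOn ℂ f (ball 0 1))
    (hm : MapsTo f (ball (0 : ℂ) 1) (ball (0 : ℂ) 1)) {α β : ℂ}
    (hα : Norm.norm α < 1) (hβ : Norm.norm β < 1) :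
    Norm.norm (f α - f β) ≤ poincareDist α β := by
  by_cases hab : α = β
  · subst hab
    simp [poincareDist, arctanh]
  · set τr := Norm.norm ((α - β) / (1 - (starRingEnd ℂ) α * β)) with hτ
    have hdne := denom_ne α β hα hβ
    have hτpos : 0 < τr := by
      rw [hτ]
      exact norm_pos_iff.mpr (div_ne_zero (sub_ne_zero.mpr hab) hdne)
    have hτlt : τr < 1 := by
      rw [hτ, norm_div, div_lt_one (norm_pos_iff.mpr hdne)]
      exact abs_lt_abs_denom α β hα hβ
    set u : ℂ := (α - β) / ((τr : ℂ) * (1 - (starRingEnd ℂ) α * β)) with hu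
    have hτC : ((τr : ℝ) : ℂ) ≠ 0 := by exact_mod_cast hτpos.ne'
    have huabs : Norm.norm u = 1 := by
      rw [hu, norm_div, norm_mul, Complex.norm_real, Real.norm_eq_abs, _root_.abs_of_nonneg hτpos.le]
      rw [hτ, norm_div]
      have h1 : Norm.norm (α - β) ≠ 0 := norm_ne_zero_iff.mpr (sub_ne_zero.mpr hab)
      have h2 : Norm.norm (1 - (starRingEnd ℂ) α * β) ≠ 0 := norm_ne_zero_iff.mpr hdne
      field_simp
      exact div_self (by rwa [mul_comm] at h2)
    have habsuζ : ∀ ζ : ℂ, ζ ∈ ball (0 : ℂ) 1 → Norm.norm (u * ζ) < 1 := by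
      intro ζ hζ
      rw [norm_mul, huabs, one_mul]
      exact (mem_ball_iff _).mp hζ
    set M : ℂ → ℂ := fun ζ => mob α (u * ζ) with hM
    have hMd : DifferentiableOn ℂ M (ball 0 1) :=
      (diffOn_mob α hα).comp ((differentiable_const u).mul differentiable_id).differentiableOn
        (fun ζ hζ => (mem_ball_iff _).mpr (habsuζ ζ hζ))
    have hMm : MapsTo M (ball (0 : ℂ) 1) (ball (0 : ℂ) 1) := fun ζ hζ =>
      (mem_ball_iff _).mpr (mob_mem α _ hα (habsuζ ζ hζ))
    set g : ℂ → ℂ := f ∘ M with hg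
    have hgd : DifferentiableOn ℂ g (ball 0 1) := hd.comp hMd hMm
    have hgm : MapsTo g (ball (0 : ℂ) 1) (ball (0 : ℂ) 1) := hm.comp hMm
    have hg0 : g 0 = f α := by simp [hg, hM, mob_zero]
    have hgτ : g (τr : ℂ) = f β := by
      have e : u * (τr : ℂ) = (α - β) / (1 - (starRingEnd ℂ) α * β) := by
        rw [hu]
        field_simp
      have e2 : mob α (u * (τr : ℂ)) = β := by
        rw [e]
        have : (α - β) / (1 - (starRingEnd ℂ) α * β) = mob α β := rfl
        rw [this, mob_mob α β hα hβ]
      simp [hg, hM, e2]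
    have hkey := key_integral hgd hgm hτpos.le hτlt
    rw [hg0, hgτ] at hkey
    calc Norm.norm (f α - f β) = Norm.norm (f β - f α) := by
          rw [norm_sub_rev]
      _ ≤ arctanh τr := hkey
      _ = poincareDist α β := by rw [poincareDist, ← hτ]


lemma lower_bound (a : ℂ) (R : ℝ) (hR : 0 < R) (z w : ℂ) :
    ENNReal.ofReal (Norm.norm (z - w) / R) ≤ kobayashiDistOn ℂ (ball a R) z w := by
  rw [kobayashiDistOn]
  refine le_iInf fun m => le_iInf fun f => le_iInf fun ab => le_iInf fun hdiff =>
    le_iInf fun hsub => le_iInf fun hmem => le_iInf fun hp => le_iInf fun hq =>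
    le_iInf fun hchain => ?_
  apply ENNReal.ofReal_le_ofReal
  -- per-disc bound
  have hdisc : ∀ j : Fin (m + 1),
      Norm.norm (f j (ab j).1 - f j (ab j).2) / R ≤ poincareDist (ab j).1 (ab j).2 := by
    intro j
    have hF : DifferentiableOn ℂ (fun ζ => (f j ζ - a) / (R : ℂ)) (ball 0 1) :=
      (((hdiff j).differentiableOn).sub_const a).div_const _
    have hFm : MapsTo (fun ζ => (f j ζ - a) / (R : ℂ)) (ball (0 : ℂ) 1) (ball (0 : ℂ) 1) := by
      intro ζ hζ
      have h1 : f j ζ ∈ ball a R := (hsub j) (mem_image_of_mem _ hζ)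
      rw [mem_ball, Complex.dist_eq] at h1
      rw [mem_ball_iff, norm_div, Complex.norm_real, Real.norm_eq_abs, _root_.abs_of_pos hR, div_lt_one hR]
      exact h1
    have := sp_dist hF hFm ((mem_ball_iff _).mp (hmem j).1) ((mem_ball_iff _).mp (hmem j).2)
    have e : (f j (ab j).1 - a) / (R : ℂ) - (f j (ab j).2 - a) / (R : ℂ)
        = (f j (ab j).1 - f j (ab j).2) / (R : ℂ) := by
      rw [div_sub_div_same]; congr 1; ring
    rw [e, norm_div, Complex.norm_real, Real.norm_eq_abs, _root_.abs_of_pos hR] at this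
    exact this
  -- telescoping
  set c : ℕ → ℂ := fun k => if h : k < m + 1 then f ⟨k, h⟩ (ab ⟨k, h⟩).1 else w with hc
  have hstep : ∀ j : Fin (m + 1), f j (ab j).1 - f j (ab j).2 = c j.val - c (j.val + 1) := by
    intro j
    have h1 : c j.val = f j (ab j).1 := by
      rw [hc]; simp only [j.isLt, dif_pos, Fin.eta]
    have h2 : c (j.val + 1) = f j (ab j).2 := by
      by_cases hj : j.val < m
      · have hlt : j.val + 1 < m + 1 := by omega
        rw [hc]; simp only [hlt, dif_pos]
        have hcc := hchain ⟨j.val, hj⟩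
        have e1 : (Fin.castSucc (⟨j.val, hj⟩ : Fin m)) = j := by ext; simp
        have e2 : (Fin.succ (⟨j.val, hj⟩ : Fin m)) = (⟨j.val + 1, hlt⟩ : Fin (m + 1)) := by
          ext; simp
        rw [e1, e2] at hcc
        exact hcc.symm
      · have hj' : j.val = m := by omega
        have hlast : j = Fin.last m := by ext; rw [Fin.val_last]; exact hj'
        rw [hc]; simp only [hj', dif_neg (lt_irrefl (m + 1))]
        rw [hlast]
        exact hq.symm
    rw [h1, h2]
  have htel : z - w = ∑ k ∈ Finset.range (m + 1), (c k - c (k + 1)) := by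
    rw [Finset.sum_range_sub' c (m + 1)]
    have h0 : c 0 = z := by
      rw [hc]; simp only [Nat.succ_pos, dif_pos]
      exact hp
    have hend : c (m + 1) = w := by
      rw [hc]; simp
    rw [h0, hend]
  have habs : Norm.norm (z - w) ≤ ∑ j : Fin (m + 1),
      Norm.norm (f j (ab j).1 - f j (ab j).2) := by
    calc Norm.norm (z - w) = Norm.norm (∑ k ∈ Finset.range (m + 1), (c k - c (k + 1))) := by
          rw [← htel]
      _ ≤ ∑ k ∈ Finset.range (m + 1), Norm.norm (c k - c (k + 1)) := by
          simpa using norm_sum_le (Finset.range (m + 1)) (fun k => c k - c (k + 1))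
      _ = ∑ j : Fin (m + 1), Norm.norm (c j.val - c (j.val + 1)) := by
          rw [Fin.sum_univ_eq_sum_range (fun k => Norm.norm (c k - c (k + 1))) (m + 1)]
      _ = ∑ j : Fin (m + 1), Norm.norm (f j (ab j).1 - f j (ab j).2) := by
          refine Finset.sum_congr rfl fun j _ => ?_
          rw [hstep j]
  calc Norm.norm (z - w) / R
      ≤ (∑ j : Fin (m + 1), Norm.norm (f j (ab j).1 - f j (ab j).2)) / R := by
        gcongr
    _ = ∑ j : Fin (m + 1), Norm.norm (f j (ab j).1 - f j (ab j).2) / R :=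
        Finset.sum_div _ _ _
    _ ≤ ∑ j : Fin (m + 1), poincareDist (ab j).1 (ab j).2 :=
        Finset.sum_le_sum fun j _ => hdisc j


lemma poincareDist_zero (b : ℂ) : poincareDist 0 b = arctanh (Norm.norm b) := by
  simp [poincareDist]

lemma div_one_sub_mono {s t : ℝ} (hs : 0 ≤ s) (hst : s ≤ t) (ht : t < 1) :
    s / (1 - s) ≤ t / (1 - t) := by
  have h1 : 0 < 1 - t := by linarith
  have h2 : 0 < 1 - s := by linarith
  rw [div_le_div_iff₀ h2 h1]
  nlinarith

lemma arith_e {N x : ℝ} (hN : 0 < N) (hxN : x < N) :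
    N * (x / N / (1 - x / N)) = N * x / (N - x) := by
  have h1 : 0 < N - x := by linarith
  have e1 : 1 - x / N = (N - x) / N := by field_simp
  rw [e1]
  field_simp

lemma arith_lemma {x e c1 c2 : ℝ} (hx0 : 0 ≤ x) (he : 0 < e) (hc1 : x ≤ c1)
    (hc2 : x ^ 2 ≤ e * c2) :
    (c1 + c2 + 1) * x ≤ (x + e) * (c1 + c2 + 1 - x) := by
  nlinarith [mul_le_mul_of_nonneg_left hc1 he.le]

lemma upper_bound (a : ℂ) (R r : ℝ) (hR : 0 < R) (hr : r ∈ Ioo 0 R)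
    (z w : ℂ) (hz : Norm.norm (z - a) ≤ r) (hw : Norm.norm (w - a) ≤ r) :
    kobayashiDistOn ℂ (ball a R) z w ≤
      ENNReal.ofReal (R * Norm.norm (z - w) / (R ^ 2 - r ^ 2)) := by
  obtain ⟨hr0, hrR⟩ := hr
  have hRr : 0 < R ^ 2 - r ^ 2 := by nlinarith
  set x : ℝ := R * Norm.norm (z - w) / (R ^ 2 - r ^ 2) with hx
  have hx0 : 0 ≤ x := by positivity
  apply ENNReal.le_of_forall_pos_le_add
  intro ε hε _
  have hεR : (0:ℝ) < (ε : ℝ) := hε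
  set m : ℕ := ⌈x⌉₊ + ⌈x ^ 2 / (ε : ℝ)⌉₊ with hm
  set n : ℕ := m + 1 with hn
  have hnR : (0:ℝ) < (n : ℝ) := by positivity
  have hxn : x < (n : ℝ) := by
    have h1 : x ≤ (⌈x⌉₊ : ℝ) := Nat.le_ceil x
    have h2 : ((⌈x⌉₊ : ℕ) : ℝ) ≤ (m : ℝ) := by exact_mod_cast Nat.le_add_right _ _
    have : (m : ℝ) < (n : ℝ) := by exact_mod_cast Nat.lt_succ_self m
    linarith
  have hnC : ((n : ℕ) : ℂ) ≠ 0 := by exact_mod_cast hnR.ne'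
  have hRC : ((R : ℝ) : ℂ) ≠ 0 := by exact_mod_cast hR.ne'
  -- the subdivision points
  set p : ℕ → ℂ := fun k => z + ((k : ℂ) / (n : ℂ)) * (w - z) with hp
  set q : ℕ → ℂ := fun k => (p k - a) / (R : ℂ) with hq
  have hp0 : p 0 = z := by simp [hp]
  have hpn : p n = w := by
    rw [hp]; simp only []
    rw [div_self hnC]; ring
  have hpa : ∀ k : ℕ, k ≤ n → Norm.norm (p k - a) ≤ r := by
    intro k hk
    set θ : ℝ := (k : ℝ) / (n : ℝ) with hθ
    have hθ0 : 0 ≤ θ := by positivity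
    have hθ1 : θ ≤ 1 := by
      rw [hθ, div_le_one hnR]; exact_mod_cast hk
    have e : p k - a = ((1 - θ : ℝ) : ℂ) * (z - a) + ((θ : ℝ) : ℂ) * (w - a) := by
      rw [hp, hθ]
      push_cast
      ring
    rw [e]
    calc Norm.norm (((1 - θ : ℝ) : ℂ) * (z - a) + ((θ : ℝ) : ℂ) * (w - a))
        ≤ Norm.norm (((1 - θ : ℝ) : ℂ) * (z - a)) + Norm.norm (((θ : ℝ) : ℂ) * (w - a)) :=
          norm_add_le _ _
      _ = (1 - θ) * Norm.norm (z - a) + θ * Norm.norm (w - a) := by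
          rw [norm_mul, norm_mul, Complex.norm_real, Real.norm_eq_abs, Complex.norm_real, Real.norm_eq_abs,
            _root_.abs_of_nonneg (by linarith : (0:ℝ) ≤ 1 - θ), _root_.abs_of_nonneg hθ0]
      _ ≤ (1 - θ) * r + θ * r := by
          have h1 : 0 ≤ 1 - θ := by linarith
          nlinarith
      _ = r := by ring
  have hqle : ∀ k : ℕ, k ≤ n → Norm.norm (q k) ≤ r / R := by
    intro k hk
    rw [hq]; simp only []
    rw [norm_div, Complex.norm_real, Real.norm_eq_abs, _root_.abs_of_pos hR]
    gcongr
    exact hpa k hk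
  have hqlt : ∀ k : ℕ, k ≤ n → Norm.norm (q k) < 1 := by
    intro k hk
    refine lt_of_le_of_lt (hqle k hk) ?_
    rw [div_lt_one hR]; exact hrR
  -- the chain steps
  set b : ℕ → ℂ := fun k => mob (q k) (q (k + 1)) with hb
  set t : ℝ := x / n with ht
  have ht0 : 0 ≤ t := by positivity
  have ht1 : t < 1 := by rw [ht, div_lt_one hnR]; exact hxn
  have hble : ∀ k : ℕ, k + 1 ≤ n → Norm.norm (b k) ≤ t := by
    intro k hk
    have hk' : k ≤ n := by omega
    have hnum : Norm.norm (q k - q (k + 1)) = Norm.norm (z - w) / (n * R) := by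
      have e : q k - q (k + 1) = (z - w) / ((n : ℂ) * (R : ℂ)) := by
        rw [hq, hp]; simp only []
        field_simp
        push_cast
        ring
      rw [e, norm_div, norm_mul, Complex.norm_real, Real.norm_eq_abs, Complex.norm_natCast,
        _root_.abs_of_pos hR]
    have hXle : Norm.norm ((starRingEnd ℂ) (q k) * q (k + 1)) ≤ (r / R) ^ 2 := by
      rw [norm_mul, Complex.norm_conj, sq]
      have h1 := hqle k hk'
      have h2 := hqle (k + 1) hk
      have h0 : 0 ≤ Norm.norm (q k) := norm_nonneg _
      have h0' : 0 ≤ Norm.norm (q (k+1)) := norm_nonneg _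
      nlinarith
    have hden : (R ^ 2 - r ^ 2) / R ^ 2 ≤ Norm.norm (1 - (starRingEnd ℂ) (q k) * q (k + 1)) := by
      have htri : (1:ℝ) ≤ Norm.norm (1 - (starRingEnd ℂ) (q k) * q (k + 1))
          + Norm.norm ((starRingEnd ℂ) (q k) * q (k + 1)) := by
        have := norm_add_le (1 - (starRingEnd ℂ) (q k) * q (k + 1))
          ((starRingEnd ℂ) (q k) * q (k + 1))
        simpa using this
      have e : (R ^ 2 - r ^ 2) / R ^ 2 = 1 - (r / R) ^ 2 := by
        field_simp
      rw [e]
      linarith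
    have hdenpos : (0:ℝ) < (R ^ 2 - r ^ 2) / R ^ 2 := by positivity
    have hstep : Norm.norm (b k) ≤ (Norm.norm (z - w) / (n * R)) / ((R ^ 2 - r ^ 2) / R ^ 2) := by
      rw [hb]; simp only []
      rw [mob, norm_div, hnum]
      exact div_le_div_of_nonneg_left (by positivity) hdenpos hden
    refine hstep.trans (le_of_eq ?_)
    rw [ht, hx]
    field_simp
  have hblt : ∀ k : ℕ, k + 1 ≤ n → Norm.norm (b k) < 1 := fun k hk =>
    lt_of_le_of_lt (hble k hk) ht1
  -- the chain
  set F : Fin (m + 1) → ℂ → ℂ := fun j ζ => a + (R : ℂ) * mob (q j.val) ζ with hF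
  set AB : Fin (m + 1) → ℂ × ℂ := fun j => ((0 : ℂ), b j.val) with hAB
  have hjq : ∀ j : Fin (m + 1), Norm.norm (q j.val) < 1 := fun j =>
    hqlt j.val (le_of_lt j.isLt)
  have H1 : ∀ j : Fin (m + 1), MDifferentiableOn 𝓘(ℂ, ℂ) 𝓘(ℂ, ℂ) (F j) (ball (0 : ℂ) 1) := by
    intro j
    apply DifferentiableOn.mdifferentiableOn
    exact ((diffOn_mob (q j.val) (hjq j)).const_mul ((R : ℝ) : ℂ)).const_add a
  have H2 : ∀ j : Fin (m + 1), F j '' ball (0 : ℂ) 1 ⊆ ball a R := by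
    intro j y hy
    obtain ⟨ζ, hζ, rfl⟩ := hy
    rw [mem_ball, Complex.dist_eq, hF]; simp only []
    have e : a + (R : ℂ) * mob (q j.val) ζ - a = (R : ℂ) * mob (q j.val) ζ := by ring
    rw [e, norm_mul, Complex.norm_real, Real.norm_eq_abs, _root_.abs_of_pos hR]
    have := mob_mem (q j.val) ζ (hjq j) ((mem_ball_iff ζ).mp hζ)
    nlinarith
  have H3 : ∀ j : Fin (m + 1), (AB j).1 ∈ ball (0 : ℂ) 1 ∧ (AB j).2 ∈ ball (0 : ℂ) 1 := by
    intro j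
    constructor
    · rw [hAB]; exact mem_ball_self one_pos
    · rw [hAB]; exact (mem_ball_iff _).mpr (hblt j.val j.isLt)
  have H4 : F 0 (AB 0).1 = z := by
    rw [hF, hAB]; simp only [Fin.val_zero]
    rw [mob_zero, hq]; simp only []
    rw [hp0]
    field_simp
    ring
  have H5 : F (Fin.last m) (AB (Fin.last m)).2 = w := by
    rw [hF, hAB]; simp only [Fin.val_last]
    rw [hb]; simp only []
    rw [mob_mob _ _ (hqlt m (by omega)) (hqlt (m + 1) (by omega))]
    rw [hq]; simp only []
    rw [show m + 1 = n from rfl, hpn]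
    field_simp
    ring
  have H6 : ∀ j : Fin m, F j.castSucc (AB j.castSucc).2 = F j.succ (AB j.succ).1 := by
    intro j
    have hjlt := j.isLt
    rw [hF, hAB]; simp only [Fin.coe_castSucc, Fin.val_succ]
    rw [hb]; simp only []
    rw [mob_mob _ _ (hqlt j.val (by omega)) (hqlt (j.val + 1) (by omega)), mob_zero]
  have hchain_le : kobayashiDistOn ℂ (ball a R) z w ≤
      ENNReal.ofReal (∑ j : Fin (m + 1), poincareDist (AB j).1 (AB j).2) := by
    rw [kobayashiDistOn]
    exact iInf_le_of_le m <| iInf_le_of_le F <| iInf_le_of_le AB <| iInf_le_of_le H1 <|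
      iInf_le_of_le H2 <| iInf_le_of_le H3 <| iInf_le_of_le H4 <| iInf_le_of_le H5 <|
      iInf_le_of_le H6 le_rfl
  have hsum : (∑ j : Fin (m + 1), poincareDist (AB j).1 (AB j).2) ≤ x + (ε : ℝ) := by
    have hterm : ∀ j : Fin (m + 1), poincareDist (AB j).1 (AB j).2 ≤ t / (1 - t) := by
      intro j
      rw [hAB]; simp only []
      rw [poincareDist_zero]
      calc arctanh (Norm.norm (b j.val))
          ≤ Norm.norm (b j.val) / (1 - Norm.norm (b j.val)) :=
            arctanh_le_div (norm_nonneg _) (hblt j.val j.isLt)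
        _ ≤ t / (1 - t) :=
            div_one_sub_mono (norm_nonneg _) (hble j.val j.isLt) ht1
    have hcard : (∑ _j : Fin (m + 1), t / (1 - t)) = ((m + 1 : ℕ) : ℝ) * (t / (1 - t)) := by
      rw [Finset.sum_const, Finset.card_univ, Fintype.card_fin, nsmul_eq_mul]
    have hnx : (0 : ℝ) < (n : ℝ) - x := by linarith
    have hfinal : (n : ℝ) * x / ((n : ℝ) - x) ≤ x + (ε : ℝ) := by
      rw [div_le_iff₀ hnx]
      have hc1 : x ≤ (⌈x⌉₊ : ℝ) := Nat.le_ceil x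
      have hc2 : x ^ 2 ≤ (ε : ℝ) * (⌈x ^ 2 / (ε : ℝ)⌉₊ : ℝ) := by
        have h := Nat.le_ceil (x ^ 2 / (ε : ℝ))
        rw [div_le_iff₀ hεR] at h
        linarith [h]
      have hnval : (n : ℝ) = (⌈x⌉₊ : ℝ) + (⌈x ^ 2 / (ε : ℝ)⌉₊ : ℝ) + 1 := by
        rw [hn, hm]; push_cast; ring
      rw [hnval]
      exact arith_lemma hx0 hεR hc1 hc2
    calc (∑ j : Fin (m + 1), poincareDist (AB j).1 (AB j).2)
        ≤ ∑ _j : Fin (m + 1), t / (1 - t) := Finset.sum_le_sum fun j _ => hterm j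
      _ = ((m + 1 : ℕ) : ℝ) * (t / (1 - t)) := hcard
      _ = (n : ℝ) * (t / (1 - t)) := by rw [hn]
      _ = (n : ℝ) * x / ((n : ℝ) - x) := by rw [ht]; exact arith_e hnR hxn
      _ ≤ x + (ε : ℝ) := hfinal
  calc kobayashiDistOn ℂ (ball a R) z w
      ≤ ENNReal.ofReal (∑ j : Fin (m + 1), poincareDist (AB j).1 (AB j).2) := hchain_le
    _ ≤ ENNReal.ofReal (x + (ε : ℝ)) := ENNReal.ofReal_le_ofReal hsum
    _ = ENNReal.ofReal x + ENNReal.ofReal (ε : ℝ) := ENNReal.ofReal_add hx0 ε.2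
    _ = ENNReal.ofReal x + ε := by rw [ENNReal.ofReal_coe_nnreal]



end KobAux


theorem statement_15 (a : ℂ) (R r : ℝ) (hR : 0 < R) (hr : r ∈ Ioo 0 R)
    (z w : ℂ) (hz : ‖z - a‖ ≤ r) (hw : ‖w - a‖ ≤ r) :
    ENNReal.ofReal (‖z - w‖ / R) ≤ kobayashiDistOn ℂ (ball a R) z w ∧
      kobayashiDistOn ℂ (ball a R) z w ≤
        ENNReal.ofReal (R * ‖z - w‖ / (R ^ 2 - r ^ 2)) :=
  ⟨KobAux.lower_bound a R hR z w, KobAux.upper_bound a R r hR hr z w hz hw⟩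

end
end
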